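/- arXiv:alg-geom/9204001 — 13 statements merged into one kernel-verified Lean document; each statement's English description precedes it below -/
import Mathlib

section
/- For an integer d ≥ 3, the complement of N_d in ℕ equals {a·d + b + 1 : a, b ∈ ℕ, 0 ≤ a ≤ d-3, 0 ≤ b ≤ d-3-a}. -/
def Nd (d : ℕ) : Set ℕ := {n | ∃ a b : ℕ, n = a * (d - 1) + b * d}

lemma mem_Nd_iff (d n : ℕ) (hd : 3 ≤ d) :
    n ∈ Nd d ↔ ∃ k : ℕ, k * (d - 1) ≤ n ∧ n ≤ k * d := by
  constructor
  · rintro ⟨a, b, rfl⟩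
    refine ⟨a + b, ?_, ?_⟩
    · have : b * (d - 1) ≤ b * d := Nat.mul_le_mul_left _ (Nat.sub_le _ _)
      calc (a + b) * (d - 1) = a * (d - 1) + b * (d - 1) := by ring
        _ ≤ a * (d - 1) + b * d := by omega
    · have : a * (d - 1) ≤ a * d := Nat.mul_le_mul_left _ (Nat.sub_le _ _)
      calc a * (d - 1) + b * d ≤ a * d + b * d := by omega
        _ = (a + b) * d := by ring
  · rintro ⟨k, h1, h2⟩
    refine ⟨k * d - n, n - k * (d - 1), ?_⟩
    have h3 : (1:ℕ) ≤ d := by omega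
    zify [h1, h2, h3]
    ring

theorem stmt1 (d : ℕ) (hd : 3 ≤ d) :
    (Nd d)ᶜ = {n | ∃ a b : ℕ, a ≤ d - 3 ∧ b ≤ d - 3 - a ∧ n = a * d + b + 1} := by
  ext n
  simp only [Set.mem_compl_iff, Set.mem_setOf_eq, mem_Nd_iff d n hd]
  constructor
  · intro h
    push_neg at h
    set q := n / d with hq
    have hr : n % d < d := Nat.mod_lt _ (by omega)
    have hnd : q * d + n % d = n := by rw [hq, Nat.mul_comm]; exact Nat.div_add_mod n d
    have hkd : q * (d - 1) + q = q * d := by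
      have : (1:ℕ) ≤ d := by omega
      zify [this]; ring
    have hkd2 : (q+1) * (d - 1) + (q+1) = q * d + d := by
      have : (1:ℕ) ≤ d := by omega
      zify [this]; ring
    have hkd3 : (q + 1) * d = q * d + d := by ring
    have hle : q * (d - 1) ≤ q * d := Nat.mul_le_mul_left _ (Nat.sub_le _ _)
    have hq1 : q * d < n := h q (by omega)
    have hq2 : n < (q + 1) * (d - 1) := by
      by_contra hh
      have := h (q + 1) (by omega)
      omega
    refine ⟨q, n % d - 1, ?_, ?_, ?_⟩ <;> omega
  · rintro ⟨a, b, ha, hb, rfl⟩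
    rintro ⟨k, h1, h2⟩
    rcases le_or_gt k a with hk | hk
    · have : k * d ≤ a * d := Nat.mul_le_mul_right _ hk
      omega
    · have hm : (a + 1) * (d - 1) ≤ k * (d - 1) := Nat.mul_le_mul_right _ hk
      have e1 : (a + 1) * (d - 1) + (a + 1) = a * d + d := by
        have : (1:ℕ) ≤ d := by omega
        zify [this]; ring
      omega
end

section
/- Let d ≥ 3, let 0 ≤ δ ≤ (d-1)(d-2)/2, let k = min{ℓ ∈ ℕ : δ ≤ ℓ(ℓ+3)/2}, and set N^{(1)}_{d,δ} = N_d ∪ {n ∈ ℕ : n ≥ (d-k-3)d + k(k+3)/2 - δ + 2}. Then N^{(1)}_{d,δ} is a numerical semigroup. -/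
def N1 (d δ k : ℕ) : Set ℕ :=
  Nd d ∪ {n | ((d : ℤ) - k - 3) * d + (k * (k + 3)) / 2 - δ + 2 ≤ (n : ℤ)}

theorem stmt5 (d δ k : ℕ) (hd : 3 ≤ d) (hδ : δ ≤ (d - 1) * (d - 2) / 2)
    (hk1 : δ ≤ k * (k + 3) / 2) (hk2 : ∀ ℓ : ℕ, δ ≤ ℓ * (ℓ + 3) / 2 → k ≤ ℓ) :
    (0 ∈ N1 d δ k) ∧ (∀ x ∈ N1 d δ k, ∀ y ∈ N1 d δ k, x + y ∈ N1 d δ k) ∧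
      (N1 d δ k)ᶜ.Finite := by
  set B : ℤ := ((d : ℤ) - k - 3) * d + (k * (k + 3)) / 2 - δ + 2 with hB
  refine ⟨Or.inl ⟨0, 0, by ring⟩, ?_, ?_⟩
  · rintro x hx y hy
    rcases hx with ⟨a, b, hab⟩ | hx
    · rcases hy with ⟨a', b', hab'⟩ | hy
      · exact Or.inl ⟨a + a', b + b', by subst hab hab'; ring⟩
      · exact Or.inr (by
          simp only [Set.mem_setOf_eq] at hy ⊢
          push_cast
          omega)
    · exact Or.inr (by
        simp only [Set.mem_setOf_eq] at hx ⊢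
        push_cast
        omega)
  · apply Set.Finite.subset (Set.finite_Iio B.toNat)
    intro n hn
    simp only [Set.mem_compl_iff, N1, Set.mem_union, not_or, Set.mem_setOf_eq] at hn
    have h2 : (n : ℤ) < B := by omega
    simp only [Set.mem_Iio]
    omega
end

section
/- Let d ≥ 3, 0 ≤ δ ≤ (d-1)(d-2)/2, k = min{ℓ ∈ ℕ : δ ≤ ℓ(ℓ+3)/2}, and N^{(1)}_{d,δ} = N_d ∪ {n : n ≥ (d-k-3)d + k(k+3)/2 - δ + 2}. Then the complement ℕ \ N^{(1)}_{d,δ} has exactly g = (d-1)(d-2)/2 - δ elements. -/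
/-!
Write `m = d - 1`. Since `a (d - 1) + b d = (a + b) m + b`, a number `n` lies in `N_d` iff
`n % m ≤ n / m`; so the gaps of `N_d` are the numbers `q d + i` with `1 ≤ i` and `q + i < m`,
row `q` holding `m - 1 - q` of them. Put `e = k (k + 3) / 2`. For `k < d - 2` the threshold is
`a d + (e - δ) + 2` with `a = d - k - 3`, and minimality of `k` gives `e - δ ≤ k`, so it cuts
row `a` after `e - δ + 1` of its `k + 1` gaps; the gaps of rows `0, …, a - 1` then make up the
count to `(d - 1)(d - 2)/2 - δ`. For `k = d - 2` the bound on `δ` forces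
`δ = (d - 1)(d - 2)/2` and the threshold is `0`.
-/

lemma mem_Nd_succ_iff {m : ℕ} (hm : 0 < m) (n : ℕ) : n ∈ Nd (m + 1) ↔ n % m ≤ n / m := by
  simp only [Nd, Set.mem_ofPred_eq, Nat.add_sub_cancel]
  constructor
  · rintro ⟨a, b, rfl⟩
    rw [show a * m + b * (m + 1) = b + (a + b) * m by ring, Nat.add_mul_mod_self_right,
      Nat.add_mul_div_right _ _ hm]
    exact (Nat.mod_le b m).trans ((Nat.le_add_left b a).trans (Nat.le_add_left _ _))
  · intro h
    refine ⟨n / m - n % m, n % m, ?_⟩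
    have hn := Nat.div_add_mod n m
    zify [h] at hn ⊢
    linear_combination -hn

lemma mul_succ_add_div_lt_mod_iff {m q i : ℕ} (hq : q < m) (hi : i ≤ m) :
    (q * (m + 1) + i) / m < (q * (m + 1) + i) % m ↔ 1 ≤ i ∧ q + i < m := by
  rw [show q * (m + 1) + i = q + i + m * q by ring, Nat.add_mul_div_left _ _ (by omega),
    Nat.add_mul_mod_self_left]
  rcases lt_or_ge (q + i) m with h | h
  · rw [Nat.div_eq_of_lt h, Nat.mod_eq_of_lt h]
    omega
  · obtain ⟨r, hr, hqi⟩ : ∃ r < m, q + i = r + m * 1 := ⟨q + i - m, by omega, by omega⟩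
    rw [hqi, Nat.add_mul_div_left _ _ (by omega), Nat.add_mul_mod_self_left, Nat.div_eq_of_lt hr,
      Nat.mod_eq_of_lt hr]
    omega

lemma count_div_lt_mod_mul_succ_add {m q : ℕ} (hq : q < m) {s : ℕ} (hs : s ≤ m + 1) :
    Nat.count (fun n => n / m < n % m) (q * (m + 1) + s)
      = Nat.count (fun n => n / m < n % m) (q * (m + 1)) + (min s (m - q) - 1) := by
  rw [Nat.count_add]
  congr 1
  rw [Nat.count_eq_card_filter_range]
  have hrow : {i ∈ Finset.range s | (q * (m + 1) + i) / m < (q * (m + 1) + i) % m}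
      = Finset.Ico 1 (min s (m - q)) := by
    ext i
    simp only [Finset.mem_filter, Finset.mem_range, Finset.mem_Ico]
    constructor
    · rintro ⟨hi, hgap⟩
      have := (mul_succ_add_div_lt_mod_iff hq (by omega)).mp hgap
      omega
    · intro hi
      exact ⟨by omega, (mul_succ_add_div_lt_mod_iff hq (by omega)).mpr (by omega)⟩
  rw [hrow, Nat.card_Ico]

lemma two_mul_count_div_lt_mod_mul_succ {m q : ℕ} (hq : q ≤ m) :
    2 * Nat.count (fun n => n / m < n % m) (q * (m + 1)) + q * q + q = 2 * (q * m) := by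
  induction q with
  | zero => simp
  | succ q ih =>
    have hrow := count_div_lt_mod_mul_succ_add (s := m + 1) (by omega : q < m) le_rfl
    rw [show q * (m + 1) + (m + 1) = (q + 1) * (m + 1) by ring,
      show min (m + 1) (m - q) = m - q by omega] at hrow
    have := ih (by omega)
    rw [hrow]
    have h1 : (q + 1) * (q + 1) = q * q + 2 * q + 1 := by ring
    have h2 : (q + 1) * m = q * m + m := by ring
    omega

lemma compl_N1_eq {m δ k N : ℕ} (hm : 0 < m)
    (hN : (((m + 1 : ℕ) : ℤ) - k - 3) * (m + 1 : ℕ) + (k * (k + 3)) / 2 - δ + 2 = N) :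
    (N1 (m + 1) δ k)ᶜ = {n | n / m < n % m ∧ n < N} := by
  ext n
  simp only [N1, Set.mem_compl_iff, Set.mem_union, Set.mem_ofPred_eq, not_or, hN,
    mem_Nd_succ_iff hm, not_le, Nat.cast_lt]

lemma ncard_div_lt_mod_and_lt (m N : ℕ) :
    {n | n / m < n % m ∧ n < N}.ncard = Nat.count (fun n => n / m < n % m) N := by
  rw [Nat.count_eq_card_filter_range, ← Set.ncard_coe_finset]
  congr 1
  ext n
  simp [and_comm]

lemma sub_le_of_forall_le {δ k : ℕ} (hk : ∀ ℓ : ℕ, δ ≤ ℓ * (ℓ + 3) / 2 → k ≤ ℓ) :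
    k * (k + 3) / 2 - δ ≤ k := by
  obtain _ | j := k
  · simp
  · have hj : δ > j * (j + 3) / 2 := by
      by_contra! h
      have := hk j h
      omega
    have : (j + 1) * (j + 1 + 3) = j * (j + 3) + 2 * (j + 2) := by ring
    omega

theorem stmt6 (d δ k : ℕ) (hd : 3 ≤ d) (hδ : δ ≤ (d - 1) * (d - 2) / 2)
    (hk1 : δ ≤ k * (k + 3) / 2) (hk2 : ∀ ℓ : ℕ, δ ≤ ℓ * (ℓ + 3) / 2 → k ≤ ℓ) :
    (N1 d δ k)ᶜ.ncard = (d - 1) * (d - 2) / 2 - δ := by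
  obtain ⟨m, rfl⟩ : ∃ m, d = m + 1 := ⟨d - 1, by omega⟩
  rw [show m + 1 - 1 = m by omega, show m + 1 - 2 = m - 1 by omega] at hδ ⊢
  have hkm : k ≤ m - 1 := hk2 _ <| hδ.trans <| Nat.div_le_div_right <| by
    rw [mul_comm]; exact Nat.mul_le_mul_left _ (by omega)
  have hdiv : ((k : ℤ) * (k + 3)) / 2 = ((k * (k + 3) / 2 : ℕ) : ℤ) := by norm_cast
  have hslack := sub_le_of_forall_le hk2
  have hk_even : 2 ∣ k * (k + 3) := by
    rw [show k * (k + 3) = k * (k + 1) + 2 * k by ring]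
    exact dvd_add (Nat.even_mul_succ_self k).two_dvd (dvd_mul_right 2 k)
  rcases hkm.lt_or_eq with hlt | heq
  · obtain ⟨a, rfl⟩ : ∃ a, m = k + a + 2 := ⟨m - k - 2, by omega⟩
    rw [compl_N1_eq (N := a * (k + a + 2 + 1) + (k * (k + 3) / 2 - δ + 2)) (by omega)
        (by rw [hdiv]; push_cast [Nat.cast_sub hk1]; ring),
      ncard_div_lt_mod_and_lt, count_div_lt_mod_mul_succ_add (by omega) (by omega)]
    have hrows := two_mul_count_div_lt_mod_mul_succ (m := k + a + 2) (q := a) (by omega)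
    have hm_even : 2 ∣ (k + a + 2) * (k + a + 2 - 1) := by
      rw [show k + a + 2 - 1 = k + a + 1 by omega, mul_comm]
      exact (Nat.even_mul_succ_self _).two_dvd
    have key : 2 * (a * (k + a + 2)) + k * (k + 3) + 2
        = (k + a + 2) * (k + a + 2 - 1) + a * a + a := by
      rw [show k + a + 2 - 1 = k + a + 1 by omega]; ring
    omega
  · obtain rfl : m = k + 1 := by omega
    have hsq : k * (k + 3) = (k + 1) * (k + 1 - 1) + 2 * k := by
      rw [Nat.add_sub_cancel]; ring
    have hδk : δ + k = k * (k + 3) / 2 := by omega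
    rw [compl_N1_eq (N := 0) (by omega) (by rw [hdiv, ← hδk]; push_cast; ring),
      ncard_div_lt_mod_and_lt, Nat.count_zero]
    omega
end

section
/- Let d ≥ 3, 0 ≤ δ ≤ (d-1)(d-2)/2, k = min{ℓ : δ ≤ ℓ(ℓ+3)/2}, and N^{(1)}_{d,δ} = N_d ∪ {n : n ≥ (d-k-3)d + k(k+3)/2 - δ + 2}. Then the set ℕ \ N^{(1)}_{d,δ} consists precisely of the (d-1)(d-2)/2 - δ smallest elements of ℕ \ N_d; equivalently, N^{(1)}_{d,δ} is obtained from N_d by adjoining the δ largest elements of ℕ \ N_d. -/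
private lemma Nd_eq (m : ℕ) : Nd (m+3) = {n | ∃ a b : ℕ, n = a * (m+2) + b * (m+3)} := by
  have : m + 3 - 1 = m + 2 := by omega
  rw [Nd, this]

private lemma mem_Nd_iff_s7 (m n : ℕ) : n ∈ Nd (m+3) ↔ n % (m+2) ≤ n / (m+2) := by
  rw [Nd_eq]
  constructor
  · rintro ⟨a, b, rfl⟩
    have h1 : a * (m + 2) + b * (m + 3) = b + (a + b) * (m + 2) := by ring
    rw [h1]
    rw [Nat.add_mul_mod_self_right, Nat.add_mul_div_right _ _ (show 0 < m+2 by omega)]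
    have h4 : b % (m+2) ≤ b := Nat.mod_le ..
    exact h4.trans ((Nat.le_add_left b a).trans (Nat.le_add_left (a+b) _))
  · intro h
    set q := n / (m+2) with hq
    set r := n % (m+2) with hr
    obtain ⟨t, ht⟩ : ∃ t, q = r + t := ⟨q - r, by omega⟩
    refine ⟨t, r, ?_⟩
    have h5 : (m+2) * q + r = n := Nat.div_add_mod n (m+2)
    have h6 : t * (m + 2) + r * (m + 3) = (m+2) * (r + t) + r := by ring
    rw [h6, ← ht, h5]

private lemma notMem_Nd_iff (m n : ℕ) : n ∉ Nd (m+3) ↔ n / (m+2) < n % (m+2) := by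
  rw [mem_Nd_iff_s7]; omega

private def gapA (m : ℕ) : Finset ℕ :=
  (Finset.range ((m+1)*(m+2))).filter (fun n => n / (m+2) < n % (m+2))

private lemma gap_bound (m n : ℕ) (h : n / (m+2) < n % (m+2)) : n < (m+1)*(m+2) := by
  have h5 : (m+2) * (n / (m+2)) + n % (m+2) = n := Nat.div_add_mod n (m+2)
  have hr : n % (m+2) < m+2 := Nat.mod_lt _ (by omega)
  have hq : n / (m+2) ≤ m := by omega
  have h6 : (m+2) * (n / (m+2)) ≤ (m+2) * m := Nat.mul_le_mul_left _ hq
  have h7 : (m+1)*(m+2) = (m+2)*m + m + 2 := by ring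
  linarith

private lemma compl_Nd (m : ℕ) : (Nd (m+3))ᶜ = ↑(gapA m) := by
  ext n
  simp only [Set.mem_compl_iff, notMem_Nd_iff, gapA, Finset.coe_filter,
    Finset.mem_range, Set.mem_setOf_eq]
  exact ⟨fun h => ⟨gap_bound m n h, h⟩, fun h => h.2⟩

private lemma divmod_eq (m q r : ℕ) (hr : r < m + 2) :
    ((m+2)*q + r) / (m+2) = q ∧ ((m+2)*q + r) % (m+2) = r := by
  constructor
  · rw [Nat.mul_add_div (by omega), Nat.div_eq_of_lt hr]; omega
  · rw [Nat.mul_add_mod, Nat.mod_eq_of_lt hr]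

private def pairs (m : ℕ) : Finset (Σ _ : ℕ, ℕ) :=
  (Finset.range (m+1)).sigma (fun q => Finset.Ico (q+1) (m+2))

private lemma mem_gapA_pair (m q r : ℕ) (hq : q < r) (hr : r < m+2) :
    (m+2)*q + r ∈ gapA m := by
  obtain ⟨hd, hm⟩ := divmod_eq m q r hr
  simp only [gapA, Finset.mem_filter, Finset.mem_range, hd, hm]
  exact ⟨gap_bound m _ (by rw [hd, hm]; omega), hq⟩

private lemma card_gapA (m : ℕ) : (gapA m).card = (m+1)*(m+2)/2 := by
  have hbij : (pairs m).card = (gapA m).card := by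
    apply Finset.card_bij (fun p _ => (m+2)*p.1 + p.2)
    · rintro ⟨q, r⟩ hp
      simp only [pairs, Finset.mem_sigma, Finset.mem_range, Finset.mem_Ico] at hp
      exact mem_gapA_pair m q r (by omega) (by omega)
    · rintro ⟨q1, r1⟩ h1 ⟨q2, r2⟩ h2 he
      simp only [pairs, Finset.mem_sigma, Finset.mem_range, Finset.mem_Ico] at h1 h2
      obtain ⟨d1, m1⟩ := divmod_eq m q1 r1 (by omega)
      obtain ⟨d2, m2⟩ := divmod_eq m q2 r2 (by omega)
      have hq : q1 = q2 := by rw [← d1, ← d2, he]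
      have hrr : r1 = r2 := by rw [← m1, ← m2, he]
      subst hq; subst hrr; rfl
    · intro n hn
      simp only [gapA, Finset.mem_filter, Finset.mem_range] at hn
      refine ⟨⟨n / (m+2), n % (m+2)⟩, ?_, Nat.div_add_mod n (m+2)⟩
      simp only [pairs, Finset.mem_sigma, Finset.mem_range, Finset.mem_Ico]
      have hr : n % (m+2) < m+2 := Nat.mod_lt _ (by omega)
      omega
  have hcard : (pairs m).card = ∑ q ∈ Finset.range (m+1), (m+1-q) := by
    rw [pairs, Finset.card_sigma]
    apply Finset.sum_congr rfl
    intro q hq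
    rw [Nat.card_Ico]
    omega
  have hrefl : ∑ q ∈ Finset.range (m+1), (m+1-q) = ∑ q ∈ Finset.range (m+1), (q+1) := by
    have := Finset.sum_range_reflect (fun i => i + 1) (m+1)
    rw [← this]
    apply Finset.sum_congr rfl
    intro q hq
    simp only [Finset.mem_range] at hq
    omega
  have hgauss : 2 * ∑ q ∈ Finset.range (m+1), (q+1) = (m+1)*(m+2) := by
    have h1 : ∑ i ∈ Finset.range (m+2), i = ∑ q ∈ Finset.range (m+1), (q+1) + 0 :=
      Finset.sum_range_succ' id (m+1)
    have h2 : (∑ i ∈ Finset.range (m+2), i) * 2 = (m+2) * (m+2-1) :=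
      Finset.sum_range_id_mul_two (m+2)
    have h3 : (m+2)*(m+2-1) = (m+1)*(m+2) := by rw [show m+2-1 = m+1 from rfl]; ring
    omega
  obtain ⟨P, hP⟩ : ∃ P, (m+1)*(m+2) = P := ⟨_, rfl⟩
  rw [hP] at hgauss ⊢
  omega

private def Tc (m k c : ℕ) : ℤ := ((m:ℤ) - k) * ((m:ℤ)+3) + c + 2

private lemma gauss (t : ℕ) : 2 * ∑ q ∈ Finset.range t, (q+1) = t*(t+1) := by
  induction t with
  | zero => simp
  | succ n ih =>
    rw [Finset.sum_range_succ, Nat.mul_add, ih]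
    ring

private lemma term_eval (m k c q : ℕ) (hc : c ≤ k) (hq : q ≤ m) :
    (m+2) - max (q+1) ((Tc m k c - q*(m+2)).toNat) =
      (if q + k < m then 0 else if q + k = m then k - c else m+1-q) := by
  have key : Tc m k c - q*(m+2) = ((m:ℤ)-k-q)*((m:ℤ)+2) + ((m:ℤ)-k) + c + 2 := by
    rw [Tc]; ring
  rcases lt_trichotomy (q + k) m with h | h | h
  · rw [if_pos h]
    have h1 : (1:ℤ)*((m:ℤ)+2) ≤ ((m:ℤ)-k-q)*((m:ℤ)+2) :=
      mul_le_mul_of_nonneg_right (by push_cast; omega) (by positivity)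
    have h2 : ((m:ℤ)+2) ≤ Tc m k c - q*(m+2) := by
      rw [key]; push_cast; push_cast at h1; omega
    have h3 : m+2 ≤ (Tc m k c - q*(m+2)).toNat := by omega
    omega
  · rw [if_neg (by omega), if_pos h]
    have hm : (m:ℤ) = q + k := by push_cast; omega
    have h2 : Tc m k c - q*(m+2) = (q:ℤ) + c + 2 := by rw [Tc, hm]; ring
    have h3 : (Tc m k c - q*(m+2)).toNat = q + c + 2 := by omega
    omega
  · rw [if_neg (by omega), if_neg (by omega)]
    have h1 : ((m:ℤ)-k-q)*((m:ℤ)+2) ≤ (-1)*((m:ℤ)+2) :=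
      mul_le_mul_of_nonneg_right (by push_cast; omega) (by positivity)
    have h2 : Tc m k c - q*(m+2) ≤ 0 := by
      rw [key]; push_cast; push_cast at h1; omega
    have h3 : (Tc m k c - q*(m+2)).toNat = 0 := by omega
    omega

private def gapB (m k c : ℕ) : Finset ℕ :=
  (gapA m).filter (fun n => Tc m k c ≤ (n:ℤ))

private def pairsB (m k c : ℕ) : Finset (Σ _ : ℕ, ℕ) :=
  (Finset.range (m+1)).sigma
    (fun q => Finset.Ico (max (q+1) ((Tc m k c - q*(m+2)).toNat)) (m+2))

private lemma mem_pairsB (m k c q r : ℕ) :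
    (⟨q, r⟩ : Σ _ : ℕ, ℕ) ∈ pairsB m k c ↔
      q ≤ m ∧ q < r ∧ r < m+2 ∧ Tc m k c ≤ (q:ℤ)*(m+2) + r := by
  simp only [pairsB, Finset.mem_sigma, Finset.mem_range, Finset.mem_Ico, max_le_iff,
    Nat.lt_succ_iff]
  constructor
  · rintro ⟨h1, ⟨h2, h3⟩, h4⟩
    refine ⟨h1, by omega, h4, ?_⟩
    have := Int.toNat_le.mp h3
    push_cast at this ⊢
    omega
  · rintro ⟨h1, h2, h3, h4⟩
    refine ⟨h1, ⟨by omega, Int.toNat_le.mpr ?_⟩, h3⟩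
    push_cast
    omega

private lemma card_gapB (m k c : ℕ) :
    (gapB m k c).card = ∑ q ∈ Finset.range (m+1),
      ((m+2) - max (q+1) ((Tc m k c - q*(m+2)).toNat)) := by
  have hbij : (pairsB m k c).card = (gapB m k c).card := by
    apply Finset.card_bij (fun p _ => (m+2)*p.1 + p.2)
    · rintro ⟨q, r⟩ hp
      rw [mem_pairsB] at hp
      obtain ⟨h1, h2, h3, h4⟩ := hp
      simp only [gapB, Finset.mem_filter]
      refine ⟨mem_gapA_pair m q r h2 h3, ?_⟩
      push_cast
      push_cast at h4
      have hcm : ((q:ℤ))*((m:ℤ)+2) = ((m:ℤ)+2)*(q:ℤ) := by ring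
      omega
    · rintro ⟨q1, r1⟩ h1 ⟨q2, r2⟩ h2 he
      rw [mem_pairsB] at h1 h2
      obtain ⟨d1, m1⟩ := divmod_eq m q1 r1 (by omega)
      obtain ⟨d2, m2⟩ := divmod_eq m q2 r2 (by omega)
      have hq : q1 = q2 := by rw [← d1, ← d2, he]
      have hrr : r1 = r2 := by rw [← m1, ← m2, he]
      subst hq; subst hrr; rfl
    · intro n hn
      simp only [gapB, gapA, Finset.mem_filter, Finset.mem_range] at hn
      obtain ⟨⟨hlt, hg⟩, hT⟩ := hn
      refine ⟨⟨n / (m+2), n % (m+2)⟩, ?_, Nat.div_add_mod n (m+2)⟩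
      rw [mem_pairsB]
      have hr : n % (m+2) < m+2 := Nat.mod_lt _ (by omega)
      have h5 : (m+2) * (n / (m+2)) + n % (m+2) = n := Nat.div_add_mod n (m+2)
      refine ⟨by omega, by omega, by omega, ?_⟩
      have h5' : n / (m+2) * (m+2) + n % (m+2) = n := by rw [Nat.mul_comm] at h5; exact h5
      have h6 : (n:ℤ) = ((n/(m+2) : ℕ):ℤ) * ((m:ℤ)+2) + ((n % (m+2) : ℕ):ℤ) := by
        exact_mod_cast h5'.symm
      exact le_of_le_of_eq hT h6
  rw [← hbij, pairsB, Finset.card_sigma]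
  apply Finset.sum_congr rfl
  intro q hq
  rw [Nat.card_Ico]

private lemma sum_eval (m k c δ : ℕ) (h2c : 2*c + 2*δ = k*k + 3*k)
    (hlow : k*k + k ≤ 2*δ) (hkm : k ≤ m+1) (hδm : 2*δ ≤ (m+1)*(m+2)) :
    ∑ q ∈ Finset.range (m+1), ((m+2) - max (q+1) ((Tc m k c - q*(m+2)).toNat)) = δ := by
  have hc : c ≤ k := by omega
  have step1 : ∑ q ∈ Finset.range (m+1), ((m+2) - max (q+1) ((Tc m k c - q*(m+2)).toNat))
      = ∑ q ∈ Finset.range (m+1), (if q + k < m then 0 else if q + k = m then k - c else m+1-q) := by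
    apply Finset.sum_congr rfl
    intro q hq
    simp only [Finset.mem_range] at hq
    exact term_eval m k c q hc (by omega)
  have step2 : ∑ q ∈ Finset.range (m+1), (if q + k < m then 0 else if q + k = m then k - c else m+1-q)
      = ∑ i ∈ Finset.range (m+1), (if k < i then 0 else if i = k then k - c else i+1) := by
    rw [← Finset.sum_range_reflect (fun i => if k < i then 0 else if i = k then k - c else i+1) (m+1)]
    apply Finset.sum_congr rfl
    intro q hq
    simp only [Finset.mem_range] at hq
    rcases lt_trichotomy (q + k) m with h | h | h
    · rw [if_pos h, if_pos (by omega)]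
    · rw [if_neg (by omega), if_pos h, if_neg (by omega), if_pos (by omega)]
    · rw [if_neg (by omega), if_neg (by omega), if_neg (by omega), if_neg (by omega)]
      omega
  rw [step1, step2]
  rcases Nat.lt_or_ge k (m+1) with hk | hk
  · have hsub : ∑ i ∈ Finset.range (m+1), (if k < i then 0 else if i = k then k - c else i+1)
        = ∑ i ∈ Finset.range (k+1), (if k < i then 0 else if i = k then k - c else i+1) := by
      symm
      apply Finset.sum_subset (Finset.range_subset_range.mpr (by omega))
      intro x hx hnx
      simp only [Finset.mem_range] at hx hnx
      rw [if_pos (by omega)]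
    rw [hsub, Finset.sum_range_succ, if_neg (by omega), if_pos rfl]
    have hcongr : ∑ i ∈ Finset.range k, (if k < i then 0 else if i = k then k - c else i+1)
        = ∑ i ∈ Finset.range k, (i+1) := by
      apply Finset.sum_congr rfl
      intro i hi
      simp only [Finset.mem_range] at hi
      rw [if_neg (by omega), if_neg (by omega)]
    rw [hcongr]
    have hg : 2 * ∑ i ∈ Finset.range k, (i+1) = k*k + k := by
      rw [gauss k]; ring
    generalize k*k = K at h2c hlow hg
    omega
  · have hkeq : k = m + 1 := by omega
    have hcongr : ∑ i ∈ Finset.range (m+1), (if k < i then 0 else if i = k then k - c else i+1)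
        = ∑ i ∈ Finset.range (m+1), (i+1) := by
      apply Finset.sum_congr rfl
      intro i hi
      simp only [Finset.mem_range] at hi
      rw [if_neg (by omega), if_neg (by omega)]
    rw [hcongr]
    subst hkeq
    have h1 := gauss (m+1)
    have h4 : (m+1)*(m+2) = (m+1)*(m+1) + (m+1) := by ring
    generalize (m+1)*(m+1) = K at hlow h4
    generalize (m+1)*(m+2) = A at h1 h4 hδm
    omega

private lemma Tex_eq (m k c δ : ℕ) (h2c : 2*c + 2*δ = k*k + 3*k) :
    ((↑(m+3):ℤ) - ↑k - 3) * ↑(m+3) + ((k:ℤ) * ((k:ℤ) + 3)) / 2 - ↑δ + 2 = Tc m k c := by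
  have h : (k:ℤ) * ((k:ℤ) + 3) = 2*((c:ℤ) + (δ:ℤ)) := by
    have : ((2*c + 2*δ : ℕ) : ℤ) = ((k*k + 3*k : ℕ) : ℤ) := congrArg (fun x : ℕ => (x:ℤ)) h2c
    push_cast at this
    ring_nf
    ring_nf at this
    omega
  rw [h, Int.mul_ediv_cancel_left _ (by norm_num)]
  rw [Tc]
  push_cast
  ring

private lemma compl_N1 (m k c δ : ℕ) (h2c : 2*c + 2*δ = k*k + 3*k) :
    (N1 (m+3) δ k)ᶜ = ↑((gapA m).filter (fun n : ℕ => (n:ℤ) < Tc m k c)) := by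
  ext n
  simp only [Set.mem_compl_iff, N1, Set.mem_union, Set.mem_setOf_eq, not_or, not_le,
    Finset.coe_filter, Set.mem_setOf_eq, Finset.mem_filter]
  rw [Tex_eq m k c δ h2c]
  constructor
  · rintro ⟨h1, h2⟩
    have hg : n / (m+2) < n % (m+2) := (notMem_Nd_iff m n).mp h1
    refine ⟨?_, h2⟩
    simp only [gapA, Finset.mem_filter, Finset.mem_range]
    exact ⟨gap_bound m n hg, hg⟩
  · rintro ⟨h1, h2⟩
    simp only [gapA, Finset.mem_filter, Finset.mem_range] at h1
    exact ⟨(notMem_Nd_iff m n).mpr h1.2, h2⟩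

private lemma two_dvd_aux (k : ℕ) : 2 ∣ k*(k+3) := by
  rcases Nat.even_or_odd k with h | h
  · exact Dvd.dvd.mul_right h.two_dvd _
  · have : Even (k+3) := by rcases h with ⟨t, ht⟩; exact ⟨t+2, by omega⟩
    exact Dvd.dvd.mul_left this.two_dvd _


/-- The gaps of `N1` are exactly the `(d-1)(d-2)/2 - δ` smallest gaps of `Nd`:
the complement of `N1` is contained in that of `Nd`, has the right cardinality,
and every element of it is smaller than every gap of `Nd` not in it. -/
theorem stmt7 (d δ k : ℕ) (hd : 3 ≤ d) (hδ : δ ≤ (d - 1) * (d - 2) / 2)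
    (hk1 : δ ≤ k * (k + 3) / 2) (hk2 : ∀ ℓ : ℕ, δ ≤ ℓ * (ℓ + 3) / 2 → k ≤ ℓ) :
    (N1 d δ k)ᶜ ⊆ (Nd d)ᶜ ∧
    (N1 d δ k)ᶜ.ncard = (d - 1) * (d - 2) / 2 - δ ∧
    ((Nd d)ᶜ \ (N1 d δ k)ᶜ).ncard = δ ∧
    (∀ x ∈ (N1 d δ k)ᶜ, ∀ y ∈ (Nd d)ᶜ \ (N1 d δ k)ᶜ, x < y) := by
  obtain ⟨m, rfl⟩ : ∃ m, d = m + 3 := ⟨d - 3, by omega⟩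
  have hH : (k*(k+3)/2) * 2 = k*k + 3*k := by
    rw [Nat.div_mul_cancel (two_dvd_aux k)]; ring
  -- atomize
  obtain ⟨H, hHdef⟩ : ∃ H, k*(k+3)/2 = H := ⟨_, rfl⟩
  rw [hHdef] at hk1 hH
  obtain ⟨K, hKdef⟩ : ∃ K, k*k = K := ⟨_, rfl⟩
  rw [hKdef] at hH
  have h2c : 2*(H - δ) + 2*δ = k*k + 3*k := by rw [hKdef]; omega
  have hlow : k*k + k ≤ 2*δ := by
    rw [hKdef]
    rcases Nat.eq_zero_or_pos k with h0 | hpos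
    · subst h0; simp at hKdef; omega
    · obtain ⟨j, rfl⟩ : ∃ j, k = j+1 := ⟨k-1, by omega⟩
      have hj : ¬ δ ≤ j*(j+3)/2 := fun h => by have := hk2 j h; omega
      have hHj : (j*(j+3)/2)*2 = j*j+3*j := by
        rw [Nat.div_mul_cancel (two_dvd_aux j)]; ring
      have hkk : (j+1)*(j+1) + (j+1) = j*j + 3*j + 2 := by ring
      rw [← hKdef]
      generalize j*(j+3)/2 = Hj at hj hHj
      generalize hg2 : j*j = J at hHj hkk
      generalize (j+1)*(j+1) = K2 at hkk ⊢
      omega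
  have hδm : 2*δ ≤ (m+1)*(m+2) := by
    have e1 : (m+3-1)*(m+3-2)/2 = (m+1)*(m+2)/2 := by
      rw [show m+3-1 = m+2 from rfl, show m+3-2 = m+1 from rfl, Nat.mul_comm]
    rw [e1] at hδ
    have hev2 : 2 ∣ (m+1)*(m+2) := Even.two_dvd (Nat.even_mul_succ_self (m+1))
    have hH2 : ((m+1)*(m+2)/2) * 2 = (m+1)*(m+2) := Nat.div_mul_cancel hev2
    generalize (m+1)*(m+2) = A at hδ hH2 ⊢
    omega
  have hkm : k ≤ m+1 := by
    apply hk2 (m+1)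
    rw [Nat.le_div_iff_mul_le (by norm_num)]
    have hle : (m+1)*(m+2) ≤ (m+1)*((m+1)+3) := Nat.mul_le_mul_left _ (by omega)
    generalize (m+1)*(m+2) = A at hδm hle
    generalize (m+1)*((m+1)+3) = B at hle ⊢
    omega
  have hcomplNd := compl_Nd m
  have hcomplN1 := compl_N1 m k (H - δ) δ h2c
  have hgapBcard : (gapB m k (H-δ)).card = δ := by
    rw [card_gapB]; exact sum_eval m k (H-δ) δ h2c hlow hkm hδm
  have hng : (gapA m).filter (fun n : ℕ => ¬ ((n:ℤ) < Tc m k (H-δ))) = gapB m k (H-δ) := by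
    rw [gapB]
    apply Finset.filter_congr
    intro x _
    simp [not_lt]
  have hsplit : ((gapA m).filter (fun n : ℕ => (n:ℤ) < Tc m k (H-δ))).card
      + (gapB m k (H-δ)).card = (gapA m).card := by
    rw [← hng]
    exact Finset.card_filter_add_card_filter_not (p := fun n : ℕ => (n:ℤ) < Tc m k (H-δ))
  refine ⟨Set.compl_subset_compl.mpr Set.subset_union_left, ?_, ?_, ?_⟩
  · rw [hcomplN1, Set.ncard_coe_finset]
    have e1 : (m+3-1)*(m+3-2)/2 = (m+1)*(m+2)/2 := by
      rw [show m+3-1 = m+2 from rfl, show m+3-2 = m+1 from rfl, Nat.mul_comm]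
    rw [e1]
    have hA := card_gapA m
    generalize (m+1)*(m+2) = A at hA ⊢
    omega
  · rw [hcomplNd, hcomplN1, ← Finset.coe_sdiff, Set.ncard_coe_finset]
    rw [← Finset.filter_not, hng, hgapBcard]
  · intro x hx y hy
    simp only [Set.mem_compl_iff, N1, Set.mem_union, Set.mem_setOf_eq, not_or, not_le] at hx
    obtain ⟨hx1, hx2⟩ := hx
    obtain ⟨hy1, hy2⟩ := hy
    simp only [Set.mem_compl_iff, not_not] at hy2
    rcases hy2 with hy2 | hy2
    · exact absurd hy2 hy1
    · have : (x:ℤ) < (y:ℤ) := lt_of_lt_of_le hx2 hy2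
      exact_mod_cast this
end

section
/- Let d ≥ 3 and 0 ≤ δ ≤ (d-1)(d-2)/2 with g = (d-1)(d-2)/2 - δ. Let N be any subset of ℕ containing N_d whose complement in ℕ has exactly g elements α_1 < α_2 < ⋯ < α_g, and let α_1^{(1)} < ⋯ < α_g^{(1)} be the elements of ℕ \ N^{(1)}_{d,δ}. Then α_i^{(1)} ≤ α_i for all 1 ≤ i ≤ g. -/
theorem stmt8 (d δ k g : ℕ) (hd : 3 ≤ d) (hδ : δ ≤ (d - 1) * (d - 2) / 2)
    (hg : g = (d - 1) * (d - 2) / 2 - δ)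
    (hk1 : δ ≤ k * (k + 3) / 2) (hk2 : ∀ ℓ : ℕ, δ ≤ ℓ * (ℓ + 3) / 2 → k ≤ ℓ)
    (N : Set ℕ) (hN : Nd d ⊆ N) (hcard : Nᶜ.ncard = g)
    (α : Fin g → ℕ) (hα : StrictMono α) (hαrange : Set.range α = Nᶜ)
    (α1 : Fin g → ℕ) (hα1 : StrictMono α1) (hα1range : Set.range α1 = (N1 d δ k)ᶜ) :
    ∀ i : Fin g, α1 i ≤ α i := by
  intro i
  set T : ℤ := ((d : ℤ) - k - 3) * d + (k * (k + 3)) / 2 - δ + 2 with hT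
  by_contra hlt
  push_neg at hlt
  have hA1fin : ((N1 d δ k)ᶜ : Set ℕ).Finite := by
    rw [← hα1range]; exact Set.finite_range α1
  -- the set (N1)ᶜ ∩ Iic (α i) has at least i+1 elements
  have key : (i : ℕ) + 1 ≤ (((N1 d δ k)ᶜ ∩ Set.Iic (α i)) : Set ℕ).ncard := by
    by_cases hcase : T ≤ (α i : ℤ)
    · have hsub : ((N1 d δ k)ᶜ : Set ℕ) ⊆ Set.Iic (α i) := by
        intro n hn
        simp only [N1, Set.mem_compl_iff, Set.mem_union, Set.mem_setOf_eq, not_or] at hn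
        have h2 : (n : ℤ) < T := not_le.mp hn.2
        have : (n : ℤ) ≤ (α i : ℤ) := le_of_lt (lt_of_lt_of_le h2 hcase)
        exact_mod_cast this
      rw [Set.inter_eq_self_of_subset_left hsub]
      have hcard1 : ((N1 d δ k)ᶜ : Set ℕ).ncard = g := by
        rw [← hα1range, ← Set.image_univ, ← Finset.coe_univ, ← Finset.coe_image,
          Set.ncard_coe_finset, Finset.card_image_of_injective _ hα1.injective,
          Finset.card_univ, Fintype.card_fin]
      rw [hcard1]
      exact i.isLt
    · push_neg at hcase
      have hsub : (α '' {j | j ≤ i}) ⊆ ((N1 d δ k)ᶜ ∩ Set.Iic (α i)) := by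
        rintro n ⟨j, hj, rfl⟩
        have hmem : α j ∈ Nᶜ := by rw [← hαrange]; exact ⟨j, rfl⟩
        have hle : α j ≤ α i := hα.monotone hj
        refine ⟨?_, hle⟩
        simp only [N1, Set.mem_compl_iff, Set.mem_union, Set.mem_setOf_eq, not_or]
        constructor
        · intro hNd; exact hmem (hN hNd)
        · rw [← hT]
          push_neg
          calc (α j : ℤ) ≤ (α i : ℤ) := by exact_mod_cast hle
            _ < T := hcase
      have hcard2 : (α '' {j | j ≤ i}).ncard = (i : ℕ) + 1 := by
        have : ({j | j ≤ i} : Set (Fin g)) = ↑(Finset.Iic i) := by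
          ext j; simp
        rw [this, ← Finset.coe_image, Set.ncard_coe_finset,
          Finset.card_image_of_injective _ hα.injective, Fin.card_Iic]
      calc (i : ℕ) + 1 = (α '' {j | j ≤ i}).ncard := hcard2.symm
        _ ≤ _ := Set.ncard_le_ncard hsub (hA1fin.inter_of_left _)
  -- but it is contained in α1 '' {j | j < i}, which has ≤ i elements
  have hsub3 : (((N1 d δ k)ᶜ ∩ Set.Iic (α i)) : Set ℕ) ⊆ α1 '' {j | (j : Fin g) < i} := by
    rintro n ⟨hn1, hn2⟩
    rw [← hα1range] at hn1
    obtain ⟨j, rfl⟩ := hn1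
    refine ⟨j, ?_, rfl⟩
    by_contra hji
    simp only [Set.mem_setOf_eq, not_lt] at hji
    have := hα1.monotone hji
    simp only [Set.mem_Iic] at hn2
    omega
  have hupper : (α1 '' {j | (j : Fin g) < i}).ncard ≤ (i : ℕ) := by
    have : ({j | (j : Fin g) < i} : Set (Fin g)) = ↑(Finset.Iio i) := by
      ext j; simp
    rw [this, ← Finset.coe_image, Set.ncard_coe_finset,
      Finset.card_image_of_injective _ hα1.injective, Fin.card_Iio]
  have hfin2 : (α1 '' {j | (j : Fin g) < i}).Finite := (Set.toFinite _).image _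
  have := Set.ncard_le_ncard hsub3 hfin2
  omega
end

section
/- For d ≥ 3 and 1 ≤ δ ≤ d-3, the set N^{max}_{d,δ} = N_d ∪ {(d-i-2)d + 1 : 1 ≤ i ≤ δ} is a numerical semigroup (closed under addition) if and only if d ≥ 2δ + 1. -/
def Nmax (d δ : ℕ) : Set ℕ :=
  Nd d ∪ {n | ∃ i : ℕ, 1 ≤ i ∧ i ≤ δ ∧ n = (d - i - 2) * d + 1}

lemma notMem_Nd (d e : ℕ) (hd : 3 ≤ d) (he : 2 * e + 4 ≤ d) :
    2 * e * d + 2 ∉ Nd d := by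
  rintro ⟨a, b, hab⟩
  obtain ⟨s, rfl⟩ : ∃ s, d = s + 1 := ⟨d - 1, by omega⟩
  rw [Nat.add_sub_cancel] at hab
  have key : (a + b) * (s + 1) = 2 * e * (s + 1) + (a + 2) := by
    have h0 : (a + b) * (s + 1) = a * s + b * (s + 1) + a := by ring
    linarith
  have hdvd : (s + 1) ∣ a + 2 := by
    have h1 : (s + 1) ∣ (a + b) * (s + 1) := dvd_mul_left _ _
    rw [key] at h1
    exact (Nat.dvd_add_right (dvd_mul_left _ _)).mp h1
  obtain ⟨t, ht⟩ := hdvd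
  have hs : 2 * e + 3 ≤ s := by omega
  match t with
  | 0 => simp at ht
  | 1 =>
    rw [mul_one] at ht
    have ha : a + 1 = s := by omega
    have h5 : a * s + s = s * s := by
      calc a * s + s = (a + 1) * s := by ring
      _ = s * s := by rw [ha]
    nlinarith [hab, h5, hs, mul_le_mul_of_nonneg_right hs (Nat.zero_le (s + 1))]
  | t + 2 =>
    have h6 : 2 * s + 2 ≤ a + 2 := by
      calc 2 * s + 2 ≤ (s + 1) * (t + 2) := by nlinarith
      _ = a + 2 := ht.symm
    have h7 : 2 * s * s ≤ a * s := by
      have h8 : 2 * s ≤ a := by omega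
      exact Nat.mul_le_mul_right s h8
    nlinarith [hab, h7, hs, mul_le_mul_of_nonneg_right hs (Nat.zero_le (s + 1))]

lemma nd_add_gap (d δ i a b : ℕ) (hd : 3 ≤ d) (hi1 : 1 ≤ i) (hi2 : i ≤ δ)
    (hδ2 : δ ≤ d - 3) :
    a * (d - 1) + b * d + ((d - i - 2) * d + 1) ∈ Nmax d δ := by
  have hid : i + 3 ≤ d := by omega
  obtain ⟨i', rfl⟩ : ∃ i', i = i' + 1 := ⟨i - 1, by omega⟩
  obtain ⟨f, rfl⟩ : ∃ f, d = i' + f + 4 := ⟨d - i' - 4, by omega⟩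
  match a with
  | 0 =>
    rcases lt_or_ge b (i' + 1) with hb | hb
    · refine Or.inr ⟨i' + 1 - b, by omega, by omega, ?_⟩
      have e1 : (i' + f + 4) - (i' + 1) - 2 = f + 1 := by omega
      have e2 : (i' + f + 4) - (i' + 1 - b) - 2 = f + 1 + b := by omega
      rw [e1, e2]; ring
    · obtain ⟨g, rfl⟩ : ∃ g, b = (i' + 1) + g := ⟨b - (i' + 1), by omega⟩
      refine Or.inl ⟨(i' + f + 4) - 1, g, ?_⟩
      have e1 : (i' + f + 4) - (i' + 1) - 2 = f + 1 := by omega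
      have e3 : (i' + f + 4) - 1 = i' + f + 3 := by omega
      rw [e1, e3]; ring
  | a' + 1 =>
    refine Or.inl ⟨a', b + (f + 2), ?_⟩
    have e1 : (i' + f + 4) - (i' + 1) - 2 = f + 1 := by omega
    have e3 : (i' + f + 4) - 1 = i' + f + 3 := by omega
    rw [e1, e3]; ring

lemma gap_add_gap (d δ i j : ℕ) (hd : 3 ≤ d) (hi1 : 1 ≤ i) (hj1 : 1 ≤ j)
    (hi2 : i ≤ δ) (hj2 : j ≤ δ) (hD : 2 * δ + 1 ≤ d) :
    ((d - i - 2) * d + 1) + ((d - j - 2) * d + 1) ∈ Nd d := by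
  obtain ⟨i', rfl⟩ : ∃ i', i = i' + 1 := ⟨i - 1, by omega⟩
  obtain ⟨j', rfl⟩ : ∃ j', j = j' + 1 := ⟨j - 1, by omega⟩
  obtain ⟨w, rfl⟩ : ∃ w, d = i' + j' + w + 3 := ⟨d - i' - j' - 3, by omega⟩
  refine ⟨(i' + j' + w + 3) - 2, w, ?_⟩
  have e1 : (i' + j' + w + 3) - (i' + 1) - 2 = j' + w := by omega
  have e2 : (i' + j' + w + 3) - (j' + 1) - 2 = i' + w := by omega
  have e3 : (i' + j' + w + 3) - 2 = i' + j' + w + 1 := by omega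
  have e4 : (i' + j' + w + 3) - 1 = i' + j' + w + 2 := by omega
  rw [e1, e2, e3, e4]; ring

theorem stmt9 (d δ : ℕ) (hd : 3 ≤ d) (hδ1 : 1 ≤ δ) (hδ2 : δ ≤ d - 3) :
    (∀ x ∈ Nmax d δ, ∀ y ∈ Nmax d δ, x + y ∈ Nmax d δ) ↔ 2 * δ + 1 ≤ d := by
  constructor
  · intro h
    by_contra hc
    push_neg at hc
    have hx : (d - δ - 2) * d + 1 ∈ Nmax d δ := Or.inr ⟨δ, hδ1, le_rfl, rfl⟩
    have hsum := h _ hx _ hx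
    set e := d - δ - 2 with he
    have hs2 : (e * d + 1) + (e * d + 1) = 2 * e * d + 2 := by ring
    rw [hs2] at hsum
    rcases hsum with hc1 | ⟨i, hi1, hi2, heq⟩
    · exact notMem_Nd d e hd (by omega) hc1
    · have h3 : (d - i - 2) * d = 2 * e * d + 1 := by linarith
      have h4 : d ∣ 1 := by
        have h5 : d ∣ 2 * e * d + 1 := h3 ▸ dvd_mul_left d (d - i - 2)
        exact (Nat.dvd_add_right (dvd_mul_left d (2 * e))).mp h5
      exact absurd (Nat.le_of_dvd one_pos h4) (by omega)
  · intro hD x hx y hy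
    rcases hx with ⟨a, b, rfl⟩ | ⟨i, hi1, hi2, rfl⟩
    · rcases hy with ⟨a', b', rfl⟩ | ⟨i, hi1, hi2, rfl⟩
      · exact Or.inl ⟨a + a', b + b', by ring⟩
      · exact nd_add_gap d δ i a b hd hi1 hi2 hδ2
    · rcases hy with ⟨a, b, rfl⟩ | ⟨j, hj1, hj2, rfl⟩
      · rw [add_comm]
        exact nd_add_gap d δ i a b hd hi1 hi2 hδ2
      · exact Or.inl (gap_add_gap d δ i j hd hi1 hj1 hi2 hj2 hD)
end

section
/- For d ≥ 4 and 2 ≤ δ ≤ d-3, the set N^{max2}_{d,δ} = N_d ∪ {(d-3)d+1} ∪ {(d-i-2)d + i : 2 ≤ i ≤ δ} is a numerical semigroup (closed under addition) if and only if d ≥ 2δ. -/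
def Nmax2 (d δ : ℕ) : Set ℕ :=
  Nd d ∪ {(d - 3) * d + 1} ∪ {n | ∃ i : ℕ, 2 ≤ i ∧ i ≤ δ ∧ n = (d - i - 2) * d + i}

lemma mem_Nmax2_iff (d δ : ℕ) (hδ : 1 ≤ δ) (n : ℕ) :
    n ∈ Nmax2 d δ ↔ (∃ a b : ℕ, n = a * (d - 1) + b * d) ∨
      (∃ i : ℕ, 1 ≤ i ∧ i ≤ δ ∧ n = (d - i - 2) * d + i) := by
  have h12 : d - 1 - 2 = d - 3 := by omega
  simp only [Nmax2, Nd, Set.mem_union, Set.mem_setOf_eq, Set.mem_singleton_iff]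
  constructor
  · rintro ((⟨a, b, h⟩ | h) | ⟨i, h1, h2, h3⟩)
    · exact Or.inl ⟨a, b, h⟩
    · exact Or.inr ⟨1, le_rfl, hδ, by rw [h12]; exact h⟩
    · exact Or.inr ⟨i, by omega, h2, h3⟩
  · rintro (⟨a, b, h⟩ | ⟨i, h1, h2, h3⟩)
    · exact Or.inl (Or.inl ⟨a, b, h⟩)
    · rcases eq_or_lt_of_le h1 with h4 | h4
      · subst h4
        rw [h12] at h3
        exact Or.inl (Or.inr h3)
      · exact Or.inr ⟨i, h4, h2, h3⟩

lemma add_Nd_E (d δ a b i : ℕ) (hd : 4 ≤ d) (hi1 : 1 ≤ i) (hiδ : i ≤ δ) (hδ2 : δ ≤ d - 3) :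
    (∃ A B : ℕ, (a * (d - 1) + b * d) + ((d - i - 2) * d + i) = A * (d - 1) + B * d) ∨
      (∃ j : ℕ, 1 ≤ j ∧ j ≤ δ ∧
        (a * (d - 1) + b * d) + ((d - i - 2) * d + i) = (d - j - 2) * d + j) := by
  have g1 : i ≤ d := by omega
  have g2 : 2 ≤ d - i := by omega
  have g3 : (1 : ℕ) ≤ d := by omega
  have g4 : (2 : ℕ) ≤ d := by omega
  rcases le_or_gt i a with h | h
  · exact Or.inl ⟨a - i, d - 2 + b, by zify [h, g1, g2, g3, g4]; ring⟩
  · rcases Nat.eq_zero_or_pos b with rfl | hb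
    · refine Or.inr ⟨i - a, by omega, by omega, ?_⟩
      zify [show a ≤ i by omega, g1, g2, g3, show i - a ≤ d by omega,
        show 2 ≤ d - (i - a) by omega]
      ring
    · exact Or.inl ⟨d - i + a, b - 1, by zify [g1, g2, g3, hb]; ring⟩

theorem stmt10 (d δ : ℕ) (hd : 4 ≤ d) (hδ1 : 2 ≤ δ) (hδ2 : δ ≤ d - 3) :
    (∀ x ∈ Nmax2 d δ, ∀ y ∈ Nmax2 d δ, x + y ∈ Nmax2 d δ) ↔ 2 * δ ≤ d := by
  have hδ' : 1 ≤ δ := by omega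
  constructor
  · intro h
    by_contra hlt
    push_neg at hlt
    have hx : (d - δ - 2) * d + δ ∈ Nmax2 d δ :=
      Set.mem_union_right _ ⟨δ, hδ1, le_rfl, rfl⟩
    have hsum := h _ hx _ hx
    rw [mem_Nmax2_iff d δ hδ'] at hsum
    obtain ⟨e, hde⟩ : ∃ e, d = δ + e + 2 := ⟨d - δ - 2, by omega⟩
    have he1 : 1 ≤ e := by omega
    obtain ⟨s, hs⟩ : ∃ s, 2 * δ = d + s := ⟨2 * δ - d, by omega⟩
    have hs1 : 1 ≤ s := by omega
    have hs6 : s + 6 ≤ d := by omega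
    have hrwδ : d - δ - 2 = e := by omega
    rw [hrwδ] at hsum
    have hs' : (2 * δ : ℤ) = d + s := by exact_mod_cast hs
    have hS : e * d + δ + (e * d + δ) = (2 * e + 1) * d + s := by
      zify; linear_combination hs'
    rw [hS] at hsum
    have hd0 : 0 < d := by omega
    rcases hsum with ⟨a, b, hab⟩ | ⟨i, hi1, hi2, hieq⟩
    · have hab' : ((2 * e + 1 : ℤ)) * d + s = a * ((d : ℤ) - 1) + b * d := by
        have hc := hab; zify [show 1 ≤ d by omega] at hc; exact_mod_cast hc
      have heq : (a + b) * d = (s + a) + (2 * e + 1) * d := by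
        zify; linear_combination -hab'
      have hdvd : d ∣ s + a := by
        have h1 : d ∣ (a + b) * d := dvd_mul_left d (a + b)
        have h2 : d ∣ (2 * e + 1) * d := dvd_mul_left d (2 * e + 1)
        have h3 : (a + b) * d - (2 * e + 1) * d = s + a := Nat.sub_eq_of_eq_add heq
        exact h3 ▸ Nat.dvd_sub h1 h2
      obtain ⟨k, hk⟩ := hdvd
      have hk1 : 1 ≤ k := by
        rcases Nat.eq_zero_or_pos k with rfl | hp
        · simp at hk; omega
        · exact hp
      have hda : d ≤ s + a := by
        rw [hk]; exact Nat.le_mul_of_pos_right d hk1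
      have hd4 : (4 : ℤ) ≤ d := by exact_mod_cast hd
      have hf1 : ((d : ℤ) - s) ≤ a := by
        have := hda; zify at this; linarith
      have hf2 : (a : ℤ) * ((d : ℤ) - 1) ≤ (2 * e + 1) * d + s := by
        have hn : a * (d - 1) ≤ (2 * e + 1) * d + s := by
          calc a * (d - 1) ≤ a * (d - 1) + b * d := Nat.le_add_right _ _
            _ = (2 * e + 1) * d + s := hab.symm
        zify [show 1 ≤ d by omega] at hn
        exact hn
      have g1 : ((d : ℤ) - s) * ((d : ℤ) - 1) ≤ (a : ℤ) * ((d : ℤ) - 1) :=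
        mul_le_mul_of_nonneg_right hf1 (by linarith)
      have hde' : (d : ℤ) = δ + e + 2 := by exact_mod_cast hde
      have h2e : (2 * e : ℤ) = (d : ℤ) - s - 4 := by linarith
      have h2ed : (2 * e : ℤ) * d = ((d : ℤ) - s - 4) * d := by rw [h2e]
      nlinarith [g1, hf2, h2ed, hd4]
    · obtain ⟨m, hm⟩ : ∃ m, d = i + m + 2 := ⟨d - i - 2, by omega⟩
      have hrwi : d - i - 2 = m := by omega
      rw [hrwi] at hieq
      have h' : s + (2 * e + 1) * d = i + m * d := by linarith
      have hmod := congrArg (· % d) h'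
      simp only [Nat.add_mul_mod_self_right] at hmod
      have hsi : s = i := by
        rwa [Nat.mod_eq_of_lt (by omega), Nat.mod_eq_of_lt (by omega)] at hmod
      have hmm : (2 * e + 1) * d = m * d := by
        have h'' := h'
        rw [hsi] at h''
        omega
      have : 2 * e + 1 = m := Nat.eq_of_mul_eq_mul_right hd0 hmm
      omega
  · intro h2 x hx y hy
    rw [mem_Nmax2_iff d δ hδ'] at hx hy ⊢
    rcases hx with ⟨a, b, rfl⟩ | ⟨i, hi1, hi2, rfl⟩ <;>
      rcases hy with ⟨a', b', rfl⟩ | ⟨j, hj1, hj2, rfl⟩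
    · exact Or.inl ⟨a + a', b + b', by ring⟩
    · exact add_Nd_E d δ a b j hd hj1 hj2 hδ2
    · rw [add_comm ((d - i - 2) * d + i) (a' * (d - 1) + b' * d)]
      exact add_Nd_E d δ a' b' i hd hi1 hi2 hδ2
    · refine Or.inl ⟨d - (i + j), d - 3, ?_⟩
      zify [show i + j ≤ d by omega, show i ≤ d by omega, show 2 ≤ d - i by omega,
        show j ≤ d by omega, show 2 ≤ d - j by omega, show 3 ≤ d by omega,
        show 1 ≤ d by omega]
      ring
end

section
/- Let d ≥ 2δ+1 with δ ≥ 1. The complement of N^{max}_{d,δ} = N_d ∪ {(d-i-2)d+1 : 1 ≤ i ≤ δ} in ℕ has exactly (d-1)(d-2)/2 - δ elements. -/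
lemma cancel_aux {d m k a b : ℕ} (ha : a < d) (hb : b < d) (h : m * d + a = k * d + b) :
    m = k ∧ a = b := by
  rcases lt_trichotomy m k with h1 | h1 | h1
  · have h2 : (m + 1) * d ≤ k * d := Nat.mul_le_mul_right d (by omega)
    have h3 : (m + 1) * d = m * d + d := by ring
    omega
  · subst h1; omega
  · have h2 : (k + 1) * d ≤ m * d := Nat.mul_le_mul_right d (by omega)
    have h3 : (k + 1) * d = k * d + d := by ring
    omega

lemma mul_pred_add {d a : ℕ} (hd : 1 ≤ d) : a * (d - 1) + a = a * d := by
  have h : d - 1 + 1 = d := by omega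
  calc a * (d - 1) + a = a * ((d - 1) + 1) := by ring
    _ = a * d := by rw [h]

lemma Nd_normal {d n : ℕ} (hd : 2 ≤ d) (hn : n ∈ Nd d) :
    ∃ a b : ℕ, a < d ∧ n = a * (d - 1) + b * d := by
  obtain ⟨a, b, rfl⟩ := hn
  refine ⟨a % d, b + a / d * (d - 1), Nat.mod_lt _ (by omega), ?_⟩
  have h := Nat.div_add_mod a d
  calc a * (d - 1) + b * d = (d * (a / d) + a % d) * (d - 1) + b * d := by rw [h]
    _ = a % d * (d - 1) + (b + a / d * (d - 1)) * d := by ring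

lemma mem_Nd_of {d m a : ℕ} (hd : 1 ≤ d) (h : a ≤ m) : m * d - a ∈ Nd d := by
  refine ⟨a, m - a, ?_⟩
  have h1 : a * (d - 1) + a = a * d := mul_pred_add hd
  have h2 : (m - a) * d + a * d = m * d := by
    have hma : m - a + a = m := by omega
    calc (m - a) * d + a * d = (m - a + a) * d := by ring
      _ = m * d := by rw [hma]
  have h3 : a ≤ a * d := Nat.le_mul_of_pos_right a (by omega)
  omega

lemma gap_decomp {d n : ℕ} (hd : 3 ≤ d) (hn : n ∉ Nd d) :
    ∃ m a : ℕ, 1 ≤ m ∧ m < a ∧ a ≤ d - 1 ∧ n = m * d - a := by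
  obtain ⟨q, r, hr, hqr⟩ : ∃ q r, r < d ∧ n = d * q + r :=
    ⟨n / d, n % d, Nat.mod_lt _ (by omega), (Nat.div_add_mod n d).symm⟩
  have hr0 : r ≠ 0 := by
    intro h
    exact hn ⟨0, q, by rw [hqr, h]; ring⟩
  refine ⟨q + 1, d - r, by omega, ?_, by omega, ?_⟩
  · by_contra hle
    push_neg at hle
    have hmem := mem_Nd_of (d := d) (m := q + 1) (a := d - r) (by omega) hle
    have heq : (q + 1) * d - (d - r) = n := by
      have h1 : (q + 1) * d = d * q + d := by ring
      omega
    rw [heq] at hmem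
    exact hn hmem
  · have h1 : (q + 1) * d = d * q + d := by ring
    omega

theorem stmt11 (d δ : ℕ) (hδ : 1 ≤ δ) (hd : 2 * δ + 1 ≤ d) :
    (Nmax d δ)ᶜ.ncard = (d - 1) * (d - 2) / 2 - δ := by
  have hd3 : 3 ≤ d := by omega
  set ub : ℕ → ℕ := fun a => if a = d - 1 then a - δ else a with hub
  set G : Finset ℕ :=
    (Finset.Ico 2 d).biUnion (fun a => (Finset.Ico 1 (ub a)).image (fun m => m * d - a)) with hG
  have hub_le : ∀ a, ub a ≤ a := by
    intro a; simp only [hub]; split <;> omega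
  have hd_le_md : ∀ m : ℕ, 1 ≤ m → d ≤ m * d := by
    intro m hm
    calc d = 1 * d := by ring
      _ ≤ m * d := Nat.mul_le_mul_right d hm
  have hub_top : ub (d - 1) = d - 1 - δ := by
    simp only [hub, if_pos rfl]
  -- Set equality
  have hGmem : ∀ n : ℕ, n ∈ G ↔ ∃ a, (2 ≤ a ∧ a < d) ∧ ∃ m, (1 ≤ m ∧ m < ub a) ∧ m * d - a = n := by
    intro n
    rw [hG]
    simp only [Finset.mem_biUnion, Finset.mem_image, Finset.mem_Ico]
  have hset : (Nmax d δ)ᶜ = ↑G := by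
    ext n
    simp only [Set.mem_compl_iff, Nmax, Set.mem_union, Set.mem_setOf_eq, not_or,
      Finset.mem_coe]
    rw [hGmem]
    constructor
    · rintro ⟨hnd, hsp⟩
      obtain ⟨m, a, hm1, hma, had, hn⟩ := gap_decomp hd3 hnd
      refine ⟨a, ⟨by omega, by omega⟩, m, ⟨hm1, ?_⟩, hn.symm⟩
      simp only [hub]
      split
      · rename_i haeq
        subst haeq
        by_contra hge
        push_neg at hge
        apply hsp
        refine ⟨d - 1 - m, by omega, by omega, ?_⟩
        have h1 : d - (d - 1 - m) - 2 = m - 1 := by omega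
        rw [h1]
        have h2 : m * d = (m - 1) * d + d := by
          have hm' : m - 1 + 1 = m := by omega
          calc m * d = (m - 1 + 1) * d := by rw [hm']
            _ = (m - 1) * d + d := by ring
        omega
      · exact hma
    · rintro ⟨a, ⟨ha2, had⟩, m, ⟨hm1, hmub⟩, rfl⟩
      have hma : m < a := lt_of_lt_of_le hmub (hub_le a)
      have hdm : d ≤ m * d := hd_le_md m hm1
      constructor
      · intro hnd
        obtain ⟨a', b', ha', hrep⟩ := Nd_normal (by omega) hnd
        have h1 : a' * (d - 1) + a' = a' * d := mul_pred_add (by omega)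
        have h2 : (a' + b') * d = a' * d + b' * d := by ring
        have hkey : m * d + a' = (a' + b') * d + a := by omega
        obtain ⟨hmk, haa⟩ := cancel_aux ha' (by omega) hkey
        omega
      · rintro ⟨i, hi1, hiδ, hrep⟩
        have h1 : (d - i - 1) * d = (d - i - 2) * d + d := by
          have hi' : d - i - 1 = d - i - 2 + 1 := by omega
          calc (d - i - 1) * d = (d - i - 2 + 1) * d := by rw [hi']
            _ = (d - i - 2) * d + d := by ring
        have hkey : m * d + (d - 1) = (d - i - 1) * d + a := by omega
        obtain ⟨hmk, haa⟩ := cancel_aux (by omega) (by omega) hkey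
        have hua : ub a = d - 1 - δ := by rw [← haa]; exact hub_top
        omega
  rw [hset, Set.ncard_coe_finset]
  -- disjointness
  have hdisj : ∀ a1 ∈ Finset.Ico 2 d, ∀ a2 ∈ Finset.Ico 2 d, a1 ≠ a2 →
      Disjoint ((Finset.Ico 1 (ub a1)).image (fun m => m * d - a1))
        ((Finset.Ico 1 (ub a2)).image (fun m => m * d - a2)) := by
    intro a1 h1 a2 h2 hne
    rw [Finset.mem_Ico] at h1 h2
    rw [Finset.disjoint_left]
    rintro n hn1 hn2
    rw [Finset.mem_image] at hn1 hn2
    obtain ⟨m1, hm1, he1⟩ := hn1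
    obtain ⟨m2, hm2, he2⟩ := hn2
    rw [Finset.mem_Ico] at hm1 hm2
    have hd1 : d ≤ m1 * d := hd_le_md m1 hm1.1
    have hd2 : d ≤ m2 * d := hd_le_md m2 hm2.1
    have he1' : m1 * d - a1 = n := he1
    have he2' : m2 * d - a2 = n := he2
    have hkey : m1 * d + a2 = m2 * d + a1 := by omega
    obtain ⟨_, haa⟩ := cancel_aux (by omega) (by omega) hkey
    exact hne haa.symm
  rw [hG, Finset.card_biUnion hdisj]
  -- each image card
  have hcard : ∀ a ∈ Finset.Ico 2 d,
      ((Finset.Ico 1 (ub a)).image (fun m => m * d - a)).card = ub a - 1 := by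
    intro a ha
    rw [Finset.mem_Ico] at ha
    rw [Finset.card_image_of_injOn, Nat.card_Ico]
    intro m1 hm1 m2 hm2 he
    rw [Finset.mem_coe, Finset.mem_Ico] at hm1 hm2
    have hd1 : d ≤ m1 * d := hd_le_md m1 hm1.1
    have hd2 : d ≤ m2 * d := hd_le_md m2 hm2.1
    have he' : m1 * d - a = m2 * d - a := he
    have hmm : m1 * d = m2 * d := by omega
    exact Nat.eq_of_mul_eq_mul_right (by omega) hmm
  rw [Finset.sum_congr rfl hcard]
  -- sum computation
  have hmem : d - 1 ∈ Finset.Ico 2 d := by rw [Finset.mem_Ico]; omega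
  have hsplit : ∑ a ∈ (Finset.Ico 2 d).erase (d - 1), (ub a - 1) + (ub (d - 1) - 1)
      = ∑ a ∈ Finset.Ico 2 d, (ub a - 1) :=
    Finset.sum_erase_add (Finset.Ico 2 d) (fun a => ub a - 1) hmem
  have hsplit2 : ∑ a ∈ (Finset.Ico 2 d).erase (d - 1), (a - 1) + ((d - 1) - 1)
      = ∑ a ∈ Finset.Ico 2 d, (a - 1) :=
    Finset.sum_erase_add (Finset.Ico 2 d) (fun a => a - 1) hmem
  have hcongr : ∑ a ∈ (Finset.Ico 2 d).erase (d - 1), (ub a - 1)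
      = ∑ a ∈ (Finset.Ico 2 d).erase (d - 1), (a - 1) := by
    apply Finset.sum_congr rfl
    intro a ha
    rw [Finset.mem_erase] at ha
    simp only [hub]
    rw [if_neg ha.1]
  have hgauss : ∑ a ∈ Finset.Ico 2 d, (a - 1) = (d - 1) * (d - 2) / 2 := by
    rw [Finset.sum_Ico_eq_sum_range]
    have h1 : ∀ i ∈ Finset.range (d - 2), (2 + i - 1) = i + 1 := by intro i _; omega
    rw [Finset.sum_congr rfl h1]
    have h2 : d - 1 = (d - 2) + 1 := by omega
    have h3 : ∑ i ∈ Finset.range (d - 1), i = ∑ i ∈ Finset.range (d - 2), (i + 1) := by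
      rw [h2, Finset.sum_range_succ']
      simp
    rw [← h3, Finset.sum_range_id]
    have h4 : d - 1 - 1 = d - 2 := by omega
    rw [h4]
  rw [hub_top] at hsplit
  omega
end

section
/- Let d ≥ 3, δ ≥ 1, d ≥ 2δ+1, and let N be a numerical semigroup with N_d ⊆ N and #(ℕ\N) = (d-1)(d-2)/2 - δ. If for some row index i with 2 ≤ i ≤ d-2 the number of elements of N of the form (d-i'-2)d + j' with 1 ≤ j' ≤ i' and i' < i is strictly less than δ, then N contains an element (d-i-2)d + j₀ for some 1 ≤ j₀ ≤ i. -/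
/-- Characterization of the complement of `Nd d`. -/
lemma nd_notmem (d : ℕ) (hd : 3 ≤ d) (n : ℕ) :
    n ∉ Nd d ↔ ∃ i' j' : ℕ, 1 ≤ j' ∧ j' ≤ i' ∧ i' ≤ d - 2 ∧
      n = (d - i' - 2) * d + j' := by
  constructor
  · intro hnot
    by_contra hno
    push_neg at hno
    apply hnot
    obtain ⟨q, r, hrd, hdm⟩ : ∃ q r, r < d ∧ n = d * q + r :=
      ⟨n / d, n % d, Nat.mod_lt _ (by omega), (Nat.div_add_mod n d).symm⟩
    rcases Nat.eq_zero_or_pos r with h0 | h1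
    · have h1 : n = d * q := by omega
      exact ⟨0, q, by rw [zero_mul, zero_add, mul_comm]; exact h1⟩
    · rcases le_or_gt (q + r + 2) d with hle | hgt
      · -- n has a representation, contradiction
        have h2 : d - (d - 2 - q) - 2 = q := by omega
        exact (hno (d - 2 - q) r h1 (by omega) (by omega)
          (by rw [h2, mul_comm]; omega)).elim
      · -- n ∈ Nd
        obtain ⟨t, ht⟩ : ∃ t, d = r + t + 1 := ⟨d - r - 1, by omega⟩
        obtain ⟨u, hu⟩ : ∃ u, q = t + u := ⟨q - t, by omega⟩
        refine ⟨t + 1, u, ?_⟩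
        have e1 : d - 1 = r + t := by omega
        rw [ht] at hdm
        rw [e1, ht, hdm, hu]
        ring
  · rintro ⟨i', j', hj1, hji, hid, rfl⟩ ⟨a, b, hab⟩
    obtain ⟨q, hq⟩ : ∃ q, d = i' + 2 + q := ⟨d - i' - 2, by omega⟩
    obtain ⟨c, hc⟩ : ∃ c, i' = j' + c := ⟨i' - j', by omega⟩
    have hq2 : d - i' - 2 = q := by omega
    rw [hq2] at hab
    have e : a * (d - 1) + b * d + a = (a + b) * d := by
      have h1 : d - 1 + 1 = d := by omega
      calc a * (d - 1) + b * d + a = a * ((d - 1) + 1) + b * d := by ring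
        _ = (a + b) * d := by rw [h1]; ring
    have hdvd : d ∣ j' + a := by
      have h2 : d ∣ q * d + j' + a := ⟨a + b, by rw [hab, e]; ring⟩
      have h3 : q * d + j' + a = q * d + (j' + a) := by ring
      rw [h3] at h2
      exact (Nat.dvd_add_right (dvd_mul_left d q)).mp h2
    have hja : d ≤ j' + a := Nat.le_of_dvd (by omega) hdvd
    have hjd : j' < d := by omega
    have haa : d - j' ≤ a := by omega
    have hge : (d - j') * (d - 1) ≤ q * d + j' := by
      calc (d - j') * (d - 1) ≤ a * (d - 1) := Nat.mul_le_mul_right _ haa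
        _ ≤ a * (d - 1) + b * d := Nat.le_add_right _ _
        _ = q * d + j' := hab.symm
    have e3 : d - j' = c + q + 2 := by omega
    have e4 : d - 1 = j' + c + q + 1 := by omega
    rw [e3, e4, hq, hc] at hge
    nlinarith [hge, hj1]

/-- Uniqueness of the representation. -/
lemma rep_inj (d : ℕ) (hd : 3 ≤ d) {i1 j1 i2 j2 : ℕ}
    (h12 : j1 ≤ i1) (h13 : i1 ≤ d - 2) (h22 : j2 ≤ i2) (h23 : i2 ≤ d - 2)
    (hj1 : j1 < d) (hj2 : j2 < d)
    (heq : (d - i1 - 2) * d + j1 = (d - i2 - 2) * d + j2) : i1 = i2 ∧ j1 = j2 := by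
  have hm1 : ((d - i1 - 2) * d + j1) % d = j1 := by
    rw [mul_comm, Nat.mul_add_mod]; exact Nat.mod_eq_of_lt hj1
  have hm2 : ((d - i2 - 2) * d + j2) % d = j2 := by
    rw [mul_comm, Nat.mul_add_mod]; exact Nat.mod_eq_of_lt hj2
  have hj : j1 = j2 := by rw [← hm1, ← hm2, heq]
  subst hj
  have hmul : (d - i1 - 2) * d = (d - i2 - 2) * d := by omega
  have hqq : d - i1 - 2 = d - i2 - 2 :=
    Nat.eq_of_mul_eq_mul_right (by omega) hmul
  exact ⟨by omega, rfl⟩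

lemma nd_compl_eq (d : ℕ) (hd : 3 ≤ d) :
    (Nd d)ᶜ = ↑(((Finset.range (d - 1)).sigma fun i => Finset.Icc 1 i).image
      fun p => (d - p.1 - 2) * d + p.2) := by
  ext n
  simp only [Set.mem_compl_iff, Finset.coe_image, Set.mem_image, Finset.mem_coe,
    Finset.mem_sigma, Finset.mem_range, Finset.mem_Icc, nd_notmem d hd]
  constructor
  · rintro ⟨i', j', h1, h2, h3, rfl⟩
    exact ⟨⟨i', j'⟩, ⟨show i' < d - 1 by omega, h1, h2⟩, rfl⟩
  · rintro ⟨⟨i', j'⟩, ⟨hir, hj1, hj2⟩, rfl⟩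
    have hir' : i' < d - 1 := hir
    have hj1' : 1 ≤ j' := hj1
    have hj2' : j' ≤ i' := hj2
    exact ⟨i', j', hj1', hj2', by omega, rfl⟩

lemma nd_compl_card (d : ℕ) (hd : 3 ≤ d) :
    (Nd d)ᶜ.ncard = (d - 1) * (d - 2) / 2 := by
  rw [nd_compl_eq d hd, Set.ncard_coe_finset]
  rw [Finset.card_image_of_injOn]
  · rw [Finset.card_sigma]
    have h1 : ∀ i ∈ Finset.range (d - 1), (Finset.Icc 1 i).card = i := by
      intro i _; rw [Nat.card_Icc]; omega
    rw [Finset.sum_congr rfl h1, Finset.sum_range_id]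
    have : d - 1 - 1 = d - 2 := by omega
    rw [this]
  · rintro ⟨i1, j1⟩ hp ⟨i2, j2⟩ hq heq
    simp only [Finset.coe_sigma, Set.mem_sigma_iff, Finset.mem_coe, Finset.mem_range,
      Finset.mem_Icc] at hp hq
    obtain ⟨he1, he2⟩ := rep_inj d hd (i1 := i1) (j1 := j1) (i2 := i2) (j2 := j2)
      (by omega) (by omega) (by omega) (by omega) (by omega) (by omega) heq
    subst he1; subst he2; rfl

theorem stmt14 (d δ : ℕ) (hd : 3 ≤ d) (hδ : 1 ≤ δ) (hd2 : 2 * δ + 1 ≤ d)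
    (N : Set ℕ) (h0 : 0 ∈ N) (hadd : ∀ x ∈ N, ∀ y ∈ N, x + y ∈ N)
    (hfin : Nᶜ.Finite) (hN : Nd d ⊆ N)
    (hcard : Nᶜ.ncard = (d - 1) * (d - 2) / 2 - δ)
    (i : ℕ) (hi1 : 2 ≤ i) (hi2 : i ≤ d - 2)
    (hfew : {n | n ∈ N ∧ ∃ i' j' : ℕ, i' < i ∧ 1 ≤ j' ∧ j' ≤ i' ∧
              n = (d - i' - 2) * d + j'}.ncard < δ) :
    ∃ j₀ : ℕ, 1 ≤ j₀ ∧ j₀ ≤ i ∧ (d - i - 2) * d + j₀ ∈ N := by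
  have hfinNd : (Nd d)ᶜ.Finite := by
    rw [nd_compl_eq d hd]; exact Finset.finite_toSet _
  have hsub : Nᶜ ⊆ (Nd d)ᶜ := Set.compl_subset_compl.mpr hN
  set E := (Nd d)ᶜ \ Nᶜ with hEdef
  have hEfin : E.Finite := hfinNd.subset Set.diff_subset
  have hδle : δ ≤ (d - 1) * (d - 2) / 2 := by
    have h1 : 2 * δ * 1 ≤ (d - 1) * (d - 2) :=
      Nat.mul_le_mul (by omega) (by omega)
    omega
  have hE : E.ncard = δ := by
    rw [hEdef, Set.ncard_diff hsub hfin, nd_compl_card d hd, hcard]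
    omega
  set F := {n | n ∈ N ∧ ∃ i' j' : ℕ, i' < i ∧ 1 ≤ j' ∧ j' ≤ i' ∧
      n = (d - i' - 2) * d + j'} with hFdef
  have hFsubE : F ⊆ E := by
    rintro n ⟨hnN, i', j', hlt, hj1, hj2, rfl⟩
    constructor
    · rw [Set.mem_compl_iff, nd_notmem d hd]
      exact ⟨i', j', hj1, hj2, by omega, rfl⟩
    · simp only [Set.mem_compl_iff, not_not]
      exact hnN
  have hnsub : ¬ (E ⊆ F) := by
    intro hsubE
    have := Set.ncard_le_ncard hsubE (hEfin.subset hFsubE)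
    omega
  obtain ⟨n, hnE, hnF⟩ := Set.not_subset.mp hnsub
  obtain ⟨hnNd, hnNc⟩ := hnE
  have hnN : n ∈ N := by simpa using hnNc
  obtain ⟨i', j', hj1, hj2, hid, hn⟩ := (nd_notmem d hd n).mp hnNd
  have hii : i ≤ i' := by
    by_contra hlt
    exact hnF ⟨hnN, i', j', by omega, hj1, hj2, hn⟩
  rcases le_or_gt j' i with hcase | hcase
  · -- j' ≤ i : add (i' - i) copies of d
    refine ⟨j', hj1, hcase, ?_⟩
    have hmem : n + (i' - i) * d ∈ N :=
      hadd n hnN _ (hN ⟨0, i' - i, by ring⟩)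
    have e : (d - i - 2) * d + j' = (d - i' - 2) * d + j' + (i' - i) * d := by
      rw [show d - i - 2 = (d - i' - 2) + (i' - i) from by omega]
      ring
    rw [e, ← hn]
    exact hmem
  · -- i < j' : add (j' - i) copies of (d-1) and (i' - j') copies of d
    refine ⟨i, by omega, le_refl i, ?_⟩
    have hmem : n + ((j' - i) * (d - 1) + (i' - j') * d) ∈ N :=
      hadd n hnN _ (hN ⟨j' - i, i' - j', rfl⟩)
    have e : (d - i - 2) * d + i
        = (d - i' - 2) * d + j' + ((j' - i) * (d - 1) + (i' - j') * d) := by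
      obtain ⟨q, hq⟩ : ∃ q, d = i' + 2 + q := ⟨d - i' - 2, by omega⟩
      obtain ⟨a', ha'⟩ : ∃ a', j' = i + a' := ⟨j' - i, by omega⟩
      obtain ⟨c, hc⟩ : ∃ c, i' = j' + c := ⟨i' - j', by omega⟩
      have e1 : d - i' - 2 = q := by omega
      have e2 : d - 1 = i' + 1 + q := by omega
      have e3 : d - i - 2 = a' + c + q := by omega
      have e4 : j' - i = a' := by omega
      have e5 : i' - j' = c := by omega
      rw [e1, e2, e3, e4, e5, hq, hc, ha']
      ring
    rw [e, ← hn]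
    exact hmem
end

section
/- For d ≥ 5, the set N^{(2)}_{d,2} = N_d ∪ {(d-3)d+1, (d-4)d+1} is a numerical semigroup with exactly (d-1)(d-2)/2 - 2 gaps. -/
private lemma md_mod (d k r : ℕ) (hr : r < d) : (k * d + r) % d = r := by
  rw [mul_comm, Nat.mul_add_mod, Nat.mod_eq_of_lt hr]

private lemma md_div (d k r : ℕ) (hr : r < d) : (k * d + r) / d = k := by
  have hd : 0 < d := lt_of_le_of_lt (Nat.zero_le r) hr
  rw [add_comm, mul_comm, Nat.add_mul_div_left _ _ hd, Nat.div_eq_of_lt hr, zero_add]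

private lemma decomp (d n : ℕ) (hd : 0 < d) : ∃ k r, r < d ∧ n = k * d + r :=
  ⟨n / d, n % d, Nat.mod_lt _ hd, by rw [mul_comm]; exact (Nat.div_add_mod _ _).symm⟩

private lemma stepD {d : ℕ} (hd : 5 ≤ d) {m : ℕ}
    (h : m % d = 0 ∨ d - 1 ≤ m / d + m % d) :
    (m + d) % d = 0 ∨ d - 1 ≤ (m + d) / d + (m + d) % d := by
  have h1 : (m + d) % d = m % d := Nat.add_mod_right m d
  have h2 : (m + d) / d = m / d + 1 := Nat.add_div_right m (by omega)
  omega

private lemma stepA {d : ℕ} (hd : 5 ≤ d) {m : ℕ}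
    (h : m % d = 0 ∨ d - 1 ≤ m / d + m % d) :
    (m + (d - 1)) % d = 0 ∨ d - 1 ≤ (m + (d - 1)) / d + (m + (d - 1)) % d := by
  have hd0 : 0 < d := by omega
  obtain ⟨k, r, hr, rfl⟩ := decomp d m hd0
  rw [md_mod d k r hr, md_div d k r hr] at h
  rcases Nat.eq_zero_or_pos r with rfl | hr1
  · have heq : k * d + 0 + (d - 1) = k * d + (d - 1) := by omega
    rw [heq, md_mod d k (d-1) (by omega), md_div d k (d-1) (by omega)]
    omega
  · obtain ⟨s, rfl⟩ : ∃ s, r = s + 1 := ⟨r - 1, by omega⟩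
    have hkk : (k + 1) * d = k * d + d := by ring
    have heq : k * d + (s + 1) + (d - 1) = (k + 1) * d + s := by omega
    rw [heq, md_mod d (k+1) s (by omega), md_div d (k+1) s (by omega)]
    omega

private lemma nd_iff {d : ℕ} (hd : 5 ≤ d) (n : ℕ) :
    n ∈ Nd d ↔ (n % d = 0 ∨ d - 1 ≤ n / d + n % d) := by
  have hd0 : 0 < d := by omega
  constructor
  · rintro ⟨a, b, rfl⟩
    induction b with
    | zero =>
      induction a with
      | zero => left; simp
      | succ a ih =>
        have heq : (a+1) * (d-1) + 0 * d = (a * (d-1) + 0 * d) + (d-1) := by ring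
        rw [heq]; exact stepA hd ih
    | succ b ih =>
      have heq : a * (d-1) + (b+1) * d = (a * (d-1) + b * d) + d := by ring
      rw [heq]; exact stepD hd ih
  · intro h
    obtain ⟨k, r, hr, hn⟩ := decomp d n hd0
    subst hn
    rw [md_mod d k r hr, md_div d k r hr] at h
    rcases Nat.eq_zero_or_pos r with rfl | hr1
    · exact ⟨0, k, by simp⟩
    · have hkr : d - 1 ≤ k + r := by omega
      refine ⟨d - r, k + r + 1 - d, ?_⟩
      zify [show r ≤ d by omega, show 1 ≤ d by omega, show d ≤ k + r + 1 by omega]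
      ring

private lemma big_mem {d : ℕ} (hd : 5 ≤ d) {n : ℕ} (h : (d-1)*(d-2) ≤ n) : n ∈ Nd d := by
  rw [nd_iff hd]
  have hd0 : 0 < d := by omega
  obtain ⟨k, r, hr, rfl⟩ := decomp d n hd0
  rw [md_mod d k r hr, md_div d k r hr]
  by_contra hc
  push_neg at hc
  obtain ⟨hc1, hc2⟩ := hc
  have hb : (d-1)*(d-2) ≤ k * d + r := h
  zify [show 1 ≤ d by omega, show 2 ≤ d by omega] at hb
  have hz1 : (1:ℤ) ≤ (r:ℤ) := by exact_mod_cast Nat.one_le_iff_ne_zero.mpr hc1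
  have hz2 : (k:ℤ) + (r:ℤ) ≤ (d:ℤ) - 2 := by
    have : k + r ≤ d - 2 := by omega
    zify [show 2 ≤ d by omega] at this; linarith
  have hz3 : (5:ℤ) ≤ (d:ℤ) := by exact_mod_cast hd
  nlinarith [mul_le_mul_of_nonneg_right (show (k:ℤ) ≤ (d:ℤ) - 2 - r by linarith)
      (show (0:ℤ) ≤ (d:ℤ) by linarith),
    mul_nonneg (show (0:ℤ) ≤ (r:ℤ) - 1 by linarith) (show (0:ℤ) ≤ (d:ℤ) - 1 by linarith)]

private lemma elem_cases {d : ℕ} (hd : 5 ≤ d) {n : ℕ}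
    (hn : n ∈ Nd d ∪ {(d-3)*d+1, (d-4)*d+1}) :
    n = 0 ∨ n = d - 1 ∨ n = d ∨ d + 1 ≤ n := by
  rcases hn with ⟨a, b, rfl⟩ | hn
  · rcases Nat.lt_or_ge (a + b) 2 with h | h
    · have hcase : (a = 0 ∧ b = 0) ∨ (a = 1 ∧ b = 0) ∨ (a = 0 ∧ b = 1) := by omega
      rcases hcase with ⟨rfl, rfl⟩ | ⟨rfl, rfl⟩ | ⟨rfl, rfl⟩ <;> simp <;> omega
    · right; right; right
      have h1 : 2 * (d-1) ≤ (a+b) * (d-1) := Nat.mul_le_mul_right _ h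
      have h2 : (a+b) * (d-1) ≤ a*(d-1) + b*d := by
        have hb : b * (d-1) ≤ b * d := Nat.mul_le_mul_left _ (by omega)
        calc (a+b)*(d-1) = a*(d-1) + b*(d-1) := by ring
          _ ≤ a*(d-1) + b*d := Nat.add_le_add_left hb _
      have h3 : d + 1 ≤ 2 * (d-1) := by omega
      linarith
  · have hA : d + 1 ≤ (d-3)*d + 1 := by
      have : 1 * d ≤ (d-3) * d := Nat.mul_le_mul_right _ (by omega)
      linarith
    have hB : d + 1 ≤ (d-4)*d + 1 := by
      have : 1 * d ≤ (d-4) * d := Nat.mul_le_mul_right _ (by omega)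
      linarith
    rcases hn with rfl | rfl
    · omega
    · omega

private lemma closed_aux {d : ℕ} (hd : 5 ≤ d) :
    ∀ x ∈ Nd d ∪ {(d-3)*d+1, (d-4)*d+1}, ∀ y ∈ Nd d ∪ {(d-3)*d+1, (d-4)*d+1},
      x + y ∈ Nd d ∪ {(d-3)*d+1, (d-4)*d+1} := by
  have key : ∀ y ∈ ({(d-3)*d+1, (d-4)*d+1} : Set ℕ),
      ∀ x ∈ Nd d ∪ {(d-3)*d+1, (d-4)*d+1},
      x + y ∈ Nd d ∪ {(d-3)*d+1, (d-4)*d+1} := by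
    intro y hy x hx
    rcases elem_cases hd hx with rfl | h1 | h1 | hxe
    · rw [zero_add]; exact Or.inr hy
    · rw [h1]
      rcases hy with rfl | rfl
      · -- (d-1) + ((d-3)*d+1) : big
        left
        apply big_mem hd
        zify [show 1 ≤ d by omega, show 2 ≤ d by omega, show 3 ≤ d by omega]
        nlinarith [show (5:ℤ) ≤ (d:ℤ) from by exact_mod_cast hd]
      · -- (d-1) + ((d-4)*d+1) = (d-3)*d
        left
        refine ⟨0, d-3, ?_⟩
        zify [show 1 ≤ d by omega, show 3 ≤ d by omega, show 4 ≤ d by omega]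
        ring
    · rw [h1]
      rcases hy with rfl | rfl
      · left
        apply big_mem hd
        zify [show 1 ≤ d by omega, show 2 ≤ d by omega, show 3 ≤ d by omega]
        nlinarith [show (5:ℤ) ≤ (d:ℤ) from by exact_mod_cast hd]
      · -- d + ((d-4)*d+1) = (d-3)*d+1
        right
        left
        zify [show 3 ≤ d by omega, show 4 ≤ d by omega]
        ring
    · left
      apply big_mem hd
      rcases hy with rfl | rfl <;>
      · have hxz : (d:ℤ) + 1 ≤ (x:ℤ) := by exact_mod_cast hxe
        zify [show 1 ≤ d by omega, show 2 ≤ d by omega, show 3 ≤ d by omega,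
          show 4 ≤ d by omega]
        nlinarith [show (5:ℤ) ≤ (d:ℤ) from by exact_mod_cast hd]
  intro x hx y hy
  rcases hy with hy | hy
  · rcases hx with hx | hx
    · obtain ⟨a, b, rfl⟩ := hx
      obtain ⟨a', b', rfl⟩ := hy
      exact Or.inl ⟨a + a', b + b', by ring⟩
    · have h := key x hx y (Or.inl hy)
      rwa [add_comm y x] at h
  · exact key y hy x hx

private def gapsFin (d : ℕ) : Finset ℕ :=
  ((Finset.range (d-1)).sigma fun k => Finset.Icc 1 (d - 2 - k)).image fun p => p.1 * d + p.2

private lemma mem_gapsFin {d : ℕ} (hd : 5 ≤ d) (n : ℕ) :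
    n ∈ gapsFin d ↔ ¬ (n % d = 0 ∨ d - 1 ≤ n / d + n % d) := by
  have hd0 : 0 < d := by omega
  simp only [gapsFin, Finset.mem_image, Finset.mem_sigma, Finset.mem_range, Finset.mem_Icc]
  constructor
  · rintro ⟨⟨k, r⟩, ⟨hk, hr1, hr2⟩, rfl⟩
    dsimp only at hk hr1 hr2 ⊢
    have hrd : r < d := by omega
    rw [md_mod d k r hrd, md_div d k r hrd]
    push_neg
    exact ⟨by omega, by omega⟩
  · intro h
    push_neg at h
    obtain ⟨h1, h2⟩ := h
    have hrd : n % d < d := Nat.mod_lt _ hd0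
    refine ⟨⟨n / d, n % d⟩, ?_, ?_⟩
    · refine ⟨?_, ?_, ?_⟩ <;> dsimp only <;> omega
    · dsimp only
      rw [mul_comm]
      exact Nat.div_add_mod _ _

private lemma gapsFin_card {d : ℕ} (hd : 5 ≤ d) :
    (gapsFin d).card = (d-1)*(d-2)/2 := by
  have hd0 : 0 < d := by omega
  have hinj : Set.InjOn (fun p : (_ : ℕ) × ℕ => p.1 * d + p.2)
      ↑((Finset.range (d-1)).sigma fun k => Finset.Icc 1 (d - 2 - k)) := by
    rintro ⟨k1, r1⟩ h1 ⟨k2, r2⟩ h2 heq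
    simp only [Finset.coe_sigma, Set.mem_sigma_iff, Finset.mem_coe, Finset.mem_range,
      Finset.mem_Icc] at h1 h2
    simp only at heq
    have e1 : r1 < d := by omega
    have e2 : r2 < d := by omega
    have a1 := md_mod d k1 r1 e1
    have a2 := md_mod d k2 r2 e2
    rw [heq] at a1
    have hr : r1 = r2 := by omega
    subst hr
    have hk : k1 = k2 := by
      have : k1 * d = k2 * d := by omega
      exact Nat.eq_of_mul_eq_mul_right hd0 this
    subst hk
    rfl
  rw [gapsFin, Finset.card_image_of_injOn hinj, Finset.card_sigma]
  have h1 : ∀ k ∈ Finset.range (d-1), (Finset.Icc 1 (d-2-k)).card = d - 2 - k := by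
    intro k _
    rw [Nat.card_Icc]
    omega
  rw [Finset.sum_congr rfl h1]
  have h2 : ∑ k ∈ Finset.range (d-1), (d - 2 - k) = ∑ k ∈ Finset.range (d-1), k := by
    rw [← Finset.sum_range_reflect]
    exact Finset.sum_congr rfl fun k hk => by
      rw [Finset.mem_range] at hk; omega
  rw [h2]
  have h3 := Finset.sum_range_id_mul_two (d-1)
  have h5 : (∑ k ∈ Finset.range (d-1), k) * 2 = (d-1)*(d-2) := by rw [h3]; congr 1
  exact (Nat.div_eq_of_eq_mul_left (by norm_num) h5.symm).symm

private lemma pair_sub {d : ℕ} (hd : 5 ≤ d) :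
    ({(d-3)*d+1, (d-4)*d+1} : Finset ℕ) ⊆ gapsFin d := by
  have hd0 : 0 < d := by omega
  intro n hn
  rw [mem_gapsFin hd]
  simp only [Finset.mem_insert, Finset.mem_singleton] at hn
  rcases hn with rfl | rfl
  · rw [md_mod d (d-3) 1 (by omega), md_div d (d-3) 1 (by omega)]
    push_neg
    exact ⟨by omega, by omega⟩
  · rw [md_mod d (d-4) 1 (by omega), md_div d (d-4) 1 (by omega)]
    push_neg
    exact ⟨by omega, by omega⟩

private lemma pair_ne {d : ℕ} (hd : 5 ≤ d) : (d-3)*d+1 ≠ (d-4)*d+1 := by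
  intro h
  have h2 : (d-3)*d = (d-4)*d := by omega
  have h3 : d - 3 = d - 4 := Nat.eq_of_mul_eq_mul_right (by omega) h2
  omega

private lemma compl_eq {d : ℕ} (hd : 5 ≤ d) :
    (Nd d ∪ {(d-3)*d+1, (d-4)*d+1} : Set ℕ)ᶜ
      = ↑(gapsFin d \ {(d-3)*d+1, (d-4)*d+1}) := by
  ext n
  simp only [Set.mem_compl_iff, Set.mem_union, Set.mem_insert_iff, Set.mem_singleton_iff,
    Finset.coe_sdiff, Set.mem_diff, Finset.mem_coe, Finset.mem_insert, Finset.mem_singleton]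
  rw [nd_iff hd, mem_gapsFin hd]
  tauto

theorem stmt15 (d : ℕ) (hd : 5 ≤ d) :
    let S : Set ℕ := Nd d ∪ {(d - 3) * d + 1, (d - 4) * d + 1}
    (0 ∈ S) ∧ (∀ x ∈ S, ∀ y ∈ S, x + y ∈ S) ∧ Sᶜ.Finite ∧
      Sᶜ.ncard = (d - 1) * (d - 2) / 2 - 2 := by
  intro S
  have hS : S = Nd d ∪ {(d - 3) * d + 1, (d - 4) * d + 1} := rfl
  refine ⟨Or.inl ⟨0, 0, by simp⟩, closed_aux hd, ?_, ?_⟩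
  · rw [hS, compl_eq hd]
    exact Finset.finite_toSet _
  · rw [hS, compl_eq hd, Set.ncard_coe_finset,
      Finset.card_sdiff_of_subset (pair_sub hd), gapsFin_card hd]
    congr 1
    rw [Finset.card_insert_of_notMem (by simp [pair_ne hd]; omega), Finset.card_singleton]
end

section
/- For d ≥ 7, the set N^{(3)}_{d,3} = N_d ∪ {(d-3)d+1, (d-4)d+1, (d-5)d+1} is a numerical semigroup with exactly (d-1)(d-2)/2 - 3 gaps. -/
section Semigroup

variable {e : ℕ}

theorem mem_Nd_succ_iff_s16 {n : ℕ} : n ∈ Nd (e + 1) ↔ ∃ q r, r ≤ q ∧ n = q * e + r := by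
  simp only [Nd, Set.mem_ofPred_eq, Nat.add_sub_cancel]
  constructor
  · rintro ⟨a, b, rfl⟩
    exact ⟨a + b, b, by omega, by ring⟩
  · rintro ⟨q, r, hrq, rfl⟩
    obtain ⟨j, rfl⟩ := Nat.exists_eq_add_of_le hrq
    exact ⟨j, r, by ring⟩

theorem zero_mem_Nd (d : ℕ) : 0 ∈ Nd d := ⟨0, 0, by simp⟩

theorem add_mem_Nd {d m n : ℕ} (hm : m ∈ Nd d) (hn : n ∈ Nd d) : m + n ∈ Nd d := by
  obtain ⟨a, b, rfl⟩ := hm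
  obtain ⟨a', b', rfl⟩ := hn
  exact ⟨a + a', b + b', by ring⟩

theorem mul_succ_add_mem_Nd {s r : ℕ} (h₁ : e ≤ s + r) (h₂ : r ≤ e + 1) :
    s * (e + 1) + r ∈ Nd (e + 1) := by
  obtain ⟨j, hj⟩ := Nat.exists_eq_add_of_le h₁
  exact mem_Nd_succ_iff_s16.2 ⟨s + 1, j, by omega, by linarith⟩

theorem add_mul_mem_of_forall_add_mem {S : Set ℕ} {g : ℕ} (hS : ∀ x ∈ S, x + g ∈ S)
    {x : ℕ} (hx : x ∈ S) (k : ℕ) : x + k * g ∈ S := by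
  induction k with
  | zero => simpa using hx
  | succ k ih => simpa [add_mul, ← add_assoc] using hS _ ih

theorem add_mem_of_mem_Nd_succ {S : Set ℕ} (h₀ : ∀ x ∈ S, x + e ∈ S)
    (h₁ : ∀ x ∈ S, x + (e + 1) ∈ S) {x n : ℕ} (hx : x ∈ S) (hn : n ∈ Nd (e + 1)) :
    x + n ∈ S := by
  obtain ⟨a, b, rfl⟩ := hn
  rw [Nat.add_sub_cancel, ← add_assoc]
  exact add_mul_mem_of_forall_add_mem h₁ (add_mul_mem_of_forall_add_mem h₀ hx a) b

end Semigroup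

section Gaps

variable {e : ℕ}

theorem mem_Nd_succ_iff_mod_le_div (he : 0 < e) {n : ℕ} : n ∈ Nd (e + 1) ↔ n % e ≤ n / e := by
  rw [mem_Nd_succ_iff_s16]
  constructor
  · rintro ⟨q, r, hrq, rfl⟩
    calc (q * e + r) % e = r % e := by rw [Nat.mul_add_mod_self_right]
      _ ≤ r := Nat.mod_le r e
      _ ≤ q := hrq
      _ ≤ (q * e + r) / e := Nat.le_div_iff_mul_le he |>.2 (Nat.le_add_right _ _)
  · intro h
    exact ⟨n / e, n % e, h, (Nat.div_add_mod' n e).symm⟩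

theorem div_mod_mul_add_of_lt (he : 0 < e) {q r : ℕ} (hr : r < e) :
    (q * e + r) / e = q ∧ (q * e + r) % e = r :=
  (Nat.div_mod_unique he).2 ⟨by ring, hr⟩

/-- The gaps of `Nd (e + 1)`: the numbers `q * e + r` with `q < r < e`. -/
def gapsNd (e : ℕ) : Finset ℕ :=
  ((Finset.range e).sigma Finset.range).image fun p => p.2 * e + p.1

theorem mem_gapsNd_iff (he : 0 < e) {n : ℕ} : n ∈ gapsNd e ↔ n / e < n % e := by
  simp only [gapsNd, Finset.mem_image, Finset.mem_sigma, Finset.mem_range, Sigma.exists]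
  constructor
  · rintro ⟨r, q, ⟨hr, hq⟩, rfl⟩
    obtain ⟨hdiv, hmod⟩ := div_mod_mul_add_of_lt he (q := q) hr
    rwa [hdiv, hmod]
  · intro h
    exact ⟨n % e, n / e, ⟨Nat.mod_lt n he, h⟩, Nat.div_add_mod' n e⟩

theorem coe_gapsNd (he : 0 < e) : (gapsNd e : Set ℕ) = (Nd (e + 1))ᶜ := by
  ext n
  simp [mem_gapsNd_iff he, mem_Nd_succ_iff_mod_le_div he]

theorem card_gapsNd (he : 0 < e) : (gapsNd e).card = e * (e - 1) / 2 := by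
  rw [gapsNd, Finset.card_image_of_injOn, Finset.card_sigma]
  · simp only [Finset.card_range, Finset.sum_range_id]
  rintro ⟨r, q⟩ h ⟨r', q'⟩ h' heq
  simp only [Finset.coe_sigma, Set.mem_sigma_iff, Finset.coe_range, Set.mem_Iio] at h h' heq
  obtain ⟨hq, hr⟩ := div_mod_mul_add_of_lt he (q := q) h.1
  rw [heq, (div_mod_mul_add_of_lt he h'.1).1] at hq
  rw [heq, (div_mod_mul_add_of_lt he h'.1).2] at hr
  rw [hq, hr]

end Gaps

section FilledGaps

variable {e k : ℕ}

/-- The gaps `c * (e + 1) + 1` with `e - 1 - k ≤ c < e - 1`; for `k = 3` and `d = e + 1` these are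
`(d - 5) * d + 1, (d - 4) * d + 1, (d - 3) * d + 1`. -/
def filledGaps (e k : ℕ) : Finset ℕ :=
  (Finset.Ico (e - 1 - k) (e - 1)).image fun c => c * (e + 1) + 1

theorem filledGaps_subset_gapsNd : filledGaps e k ⊆ gapsNd e := by
  intro n hn
  obtain ⟨c, hc, rfl⟩ := Finset.mem_image.1 hn
  rw [Finset.mem_Ico] at hc
  exact Finset.mem_image.2 ⟨⟨c + 1, c⟩, by simp only [Finset.mem_sigma, Finset.mem_range]; omega,
    by ring⟩

theorem card_filledGaps (hk : 2 * k ≤ e) : (filledGaps e k).card = k := by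
  have hinj : Function.Injective fun c => c * (e + 1) + 1 :=
    (add_left_injective 1).comp (mul_left_injective₀ (Nat.succ_ne_zero e))
  rw [filledGaps, Finset.card_image_of_injective _ hinj, Nat.card_Ico]
  omega

theorem compl_Nd_union_filledGaps (he : 0 < e) :
    (Nd (e + 1) ∪ filledGaps e k)ᶜ = ↑(gapsNd e \ filledGaps e k) := by
  rw [Finset.coe_sdiff, coe_gapsNd he, Set.compl_union, Set.sdiff_eq]

theorem add_mem_of_mem_filledGaps {t : ℕ} (ht : t ∈ filledGaps e k) :
    t + e ∈ Nd (e + 1) ∧ t + (e + 1) ∈ Nd (e + 1) ∪ filledGaps e k := by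
  obtain ⟨c, hc, rfl⟩ := Finset.mem_image.1 ht
  rw [Finset.mem_Ico] at hc
  refine ⟨⟨0, c + 1, by rw [Nat.add_sub_cancel]; ring⟩, ?_⟩
  rw [show c * (e + 1) + 1 + (e + 1) = (c + 1) * (e + 1) + 1 by ring]
  by_cases hc' : c + 1 < e - 1
  · exact Or.inr (Finset.mem_image.2 ⟨c + 1, Finset.mem_Ico.2 ⟨by omega, hc'⟩, rfl⟩)
  · exact Or.inl (mul_succ_add_mem_Nd (by omega) (by omega))

theorem add_mem_Nd_of_mem_filledGaps (hk : 2 * k ≤ e) {t t' : ℕ} (ht : t ∈ filledGaps e k)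
    (ht' : t' ∈ filledGaps e k) : t + t' ∈ Nd (e + 1) := by
  obtain ⟨c, hc, rfl⟩ := Finset.mem_image.1 ht
  obtain ⟨c', hc', rfl⟩ := Finset.mem_image.1 ht'
  rw [Finset.mem_Ico] at hc hc'
  rw [show c * (e + 1) + 1 + (c' * (e + 1) + 1) = (c + c') * (e + 1) + 2 by ring]
  exact mul_succ_add_mem_Nd (by omega) (by omega)

theorem add_mem_Nd_union_filledGaps (hk : 2 * k ≤ e) {x y : ℕ}
    (hx : x ∈ Nd (e + 1) ∪ filledGaps e k) (hy : y ∈ Nd (e + 1) ∪ filledGaps e k) :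
    x + y ∈ Nd (e + 1) ∪ filledGaps e k := by
  have he_mem : e ∈ Nd (e + 1) := mem_Nd_succ_iff_s16.2 ⟨1, 0, zero_le_one, by ring⟩
  have hsucc_mem : e + 1 ∈ Nd (e + 1) := mem_Nd_succ_iff_s16.2 ⟨1, 1, le_rfl, by ring⟩
  have closed_Nd {x n : ℕ} (hx : x ∈ Nd (e + 1) ∪ filledGaps e k) (hn : n ∈ Nd (e + 1)) :
      x + n ∈ Nd (e + 1) ∪ filledGaps e k := by
    refine add_mem_of_mem_Nd_succ ?_ ?_ hx hn
    · rintro x (hx | hx)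
      exacts [Or.inl (add_mem_Nd hx he_mem), Or.inl (add_mem_of_mem_filledGaps hx).1]
    · rintro x (hx | hx)
      exacts [Or.inl (add_mem_Nd hx hsucc_mem), (add_mem_of_mem_filledGaps hx).2]
  rcases hy with hy | hy
  · exact closed_Nd hx hy
  rcases hx with hx | hx
  · exact add_comm y x ▸ closed_Nd (Or.inr hy) hx
  · exact Or.inl (add_mem_Nd_of_mem_filledGaps hk hx hy)

end FilledGaps

theorem stmt16 (d : ℕ) (hd : 7 ≤ d) :
    let S : Set ℕ := Nd d ∪ {(d - 3) * d + 1, (d - 4) * d + 1, (d - 5) * d + 1}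
    (0 ∈ S) ∧ (∀ x ∈ S, ∀ y ∈ S, x + y ∈ S) ∧ Sᶜ.Finite ∧
      Sᶜ.ncard = (d - 1) * (d - 2) / 2 - 3 := by
  obtain ⟨e, rfl⟩ : ∃ e, d = e + 1 := ⟨d - 1, by omega⟩
  have he : 0 < e := by omega
  have hS : Nd (e + 1) ∪ {(e + 1 - 3) * (e + 1) + 1, (e + 1 - 4) * (e + 1) + 1,
      (e + 1 - 5) * (e + 1) + 1} = Nd (e + 1) ∪ filledGaps e 3 := by
    have hIco : Finset.Ico (e - 1 - 3) (e - 1) = {e + 1 - 3, e + 1 - 4, e + 1 - 5} := by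
      ext c
      simp only [Finset.mem_Ico, Finset.mem_insert, Finset.mem_singleton]
      omega
    simp [filledGaps, hIco]
  intro S
  rw [show S = Nd (e + 1) ∪ filledGaps e 3 from hS, compl_Nd_union_filledGaps he]
  refine ⟨Or.inl (zero_mem_Nd _), fun x hx y hy ↦ add_mem_Nd_union_filledGaps (by omega) hx hy,
    Finset.finite_toSet _, ?_⟩
  rw [Set.ncard_coe_finset, Finset.card_sdiff_of_subset filledGaps_subset_gapsNd, card_gapsNd he,
    card_filledGaps (by omega), Nat.add_sub_cancel, show e + 1 - 2 = e - 1 by omega]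
end

section
/- Let d ≥ 3 and 1 ≤ δ ≤ (d-1)(d-2)/2, and let N be any subset of ℕ with N_d ⊆ N and #(ℕ\N) = g = (d-1)(d-2)/2 - δ. Then the weight of N, defined as w(N) = Σ_{i=1}^{g} (α_i - i) where α_1 < ⋯ < α_g are the elements of ℕ\N, satisfies w(N) ≥ w(N^{(1)}_{d,δ}). -/
theorem stmt17 (d δ k g : ℕ) (hd : 3 ≤ d) (hδ1 : 1 ≤ δ)
    (hδ2 : δ ≤ (d - 1) * (d - 2) / 2)
    (hg : g = (d - 1) * (d - 2) / 2 - δ)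
    (hk1 : δ ≤ k * (k + 3) / 2) (hk2 : ∀ ℓ : ℕ, δ ≤ ℓ * (ℓ + 3) / 2 → k ≤ ℓ)
    (N : Set ℕ) (hN : Nd d ⊆ N) (hcard : Nᶜ.ncard = g)
    (β : Fin g → ℕ) (hβ : StrictMono β) (hβrange : Set.range β = Nᶜ)
    (β1 : Fin g → ℕ) (hβ1 : StrictMono β1) (hβ1range : Set.range β1 = (N1 d δ k)ᶜ) :
    ∑ i : Fin g, (β1 i - ((i : ℕ) + 1)) ≤ ∑ i : Fin g, (β i - ((i : ℕ) + 1)) := by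
  have key : ∀ n : ℕ, ∀ i : Fin g, i.val = n → β1 i ≤ β i := by
    intro n
    induction n using Nat.strong_induction_on with
    | _ n ih =>
      intro i hi
      by_contra h
      push_neg at h
      have h1 : β i ∈ Nᶜ := hβrange ▸ Set.mem_range_self i
      have h2 : β i ∉ Nd d := fun hmem => h1 (hN hmem)
      have h3 : β1 i ∈ (N1 d δ k)ᶜ := hβ1range ▸ Set.mem_range_self i
      have hcast : (β i : ℤ) < (β1 i : ℤ) := by exact_mod_cast h
      have h4 : ((β1 i : ℤ)) < ((d : ℤ) - k - 3) * d + (k * (k + 3)) / 2 - δ + 2 := by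
        by_contra h4
        push_neg at h4
        exact h3 (Or.inr h4)
      have h5 : β i ∉ N1 d δ k := by
        intro hmem
        rcases hmem with hmem | hmem
        · exact h2 hmem
        · have : ((d : ℤ) - k - 3) * d + (k * (k + 3)) / 2 - δ + 2 ≤ (β i : ℤ) := hmem
          linarith
      have h6 : β i ∈ Set.range β1 := by rw [hβ1range]; exact h5
      obtain ⟨m, hm⟩ := h6
      have hmi : m < i := hβ1.lt_iff_lt.mp (by rw [hm]; exact h)
      have hIH : β1 m ≤ β m := ih m.val (by rw [← hi]; exact hmi) m rfl
      have hβm : β m < β i := hβ hmi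
      omega
  exact Finset.sum_le_sum fun i _ => Nat.sub_le_sub_right (key i.val i rfl) _
end

section
/- For d ≥ 3, the numerical semigroup N^{(1)}_{d,1} obtained by adjoining the largest gap to N_d equals N_d ∪ {(d-3)d+1}, and it coincides with N^{max}_{d,1}; in particular, for δ = 1 the minimal-weight and maximal-weight semigroups agree. -/
lemma mem_Nd_of_big (e n : ℕ) (h : (e + 1) * (e + 2) ≤ n) : n ∈ Nd (e + 3) := by
  set q := n / (e + 2) with hq
  set r := n % (e + 2) with hr
  have hdm : (e + 2) * q + r = n := Nat.div_add_mod n (e + 2)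
  have hrlt : r < e + 2 := Nat.mod_lt _ (by omega)
  have hq1 : e + 1 ≤ q := (Nat.le_div_iff_mul_le (by omega)).mpr h
  have hrq : r ≤ q := by omega
  obtain ⟨s, hs⟩ := Nat.exists_eq_add_of_le hrq
  refine ⟨s, r, ?_⟩
  have h31 : e + 3 - 1 = e + 2 := by omega
  rw [h31, ← hdm, hs]
  ring

theorem stmt18 (d : ℕ) (hd : 3 ≤ d) :
    N1 d 1 1 = Nd d ∪ {(d - 3) * d + 1} ∧ N1 d 1 1 = Nmax d 1 := by
  obtain ⟨e, rfl⟩ : ∃ e, d = e + 3 := ⟨d - 3, by omega⟩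
  have key : N1 (e + 3) 1 1 = Nd (e + 3) ∪ {(e + 3 - 3) * (e + 3) + 1} := by
    ext n
    simp only [N1, Set.mem_union, Set.mem_setOf_eq, Set.mem_singleton_iff]
    have h33 : e + 3 - 3 = e := by omega
    rw [h33]
    constructor
    · rintro (h | h)
      · exact Or.inl h
      · have h' : (e : ℤ) * (e + 2) ≤ n := by
          push_cast at h
          nlinarith [h]
        have h'' : e * (e + 2) ≤ n := by exact_mod_cast h'
        by_cases hn : n = e * (e + 3) + 1
        · exact Or.inr hn
        · left
          by_cases hbig : (e + 1) * (e + 2) ≤ n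
          · exact mem_Nd_of_big e n hbig
          · have h1 : n < e * (e + 2) + (e + 2) := by
              calc n < (e + 1) * (e + 2) := Nat.lt_of_not_le hbig
                _ = e * (e + 2) + (e + 2) := by ring
            have h2 : n ≠ e * (e + 2) + (e + 1) := by
              intro hEq
              apply hn
              rw [hEq]; ring
            obtain ⟨t, s, hts, hnts⟩ : ∃ t s, e = t + s ∧ n = e * (e + 2) + t := by
              generalize hP : e * (e + 2) = P at h'' h1 h2 ⊢
              exact ⟨n - P, e - (n - P), by omega, by omega⟩
            refine ⟨s, t, ?_⟩
            have h31 : e + 3 - 1 = e + 2 := by omega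
            rw [h31, hnts, hts]
            ring
    · rintro (h | h)
      · exact Or.inl h
      · right
        subst h
        push_cast
        nlinarith [sq_nonneg ((e : ℤ))]
  refine ⟨key, ?_⟩
  rw [key]
  have h2 : Nmax (e + 3) 1 = Nd (e + 3) ∪ {(e + 3 - 3) * (e + 3) + 1} := by
    unfold Nmax
    congr 1
    ext n
    simp only [Set.mem_setOf_eq, Set.mem_singleton_iff]
    constructor
    · rintro ⟨i, h1i, h2i, rfl⟩
      have hi : i = 1 := le_antisymm h2i h1i
      subst hi
      have hsub : e + 3 - 1 - 2 = e + 3 - 3 := by omega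
      rw [hsub]
    · rintro rfl
      refine ⟨1, le_refl 1, le_refl 1, ?_⟩
      have hsub : e + 3 - 1 - 2 = e + 3 - 3 := by omega
      rw [hsub]
  rw [h2]
end
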